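/- arXiv:2412.13434 — 5 statements merged into one kernel-verified Lean document; each statement's English description precedes it below -/
import Mathlib

section
/- Escape Lemma, part (i): Let D ⊆ ℝ³ be open convex, x₀ ∈ D, v ∈ ℝ³ with j(v) := inf { r > 0 : x₀ + r⁻¹ v ∈ D } > 0, and suppose ν is a unit outer-supporting vector at z := x₀ + (1/j(v)) v ∈ ∂D, i.e. y·ν > z·ν for all y ∈ D. If x ∈ ℝ³ and t ≥ 2/j(v) satisfy x + t v ∈ D, then |x − x₀| ≥ (t/2)·j(v)·dist(x₀, ∂D). -/
noncomputable section

open scoped RealInnerProductSpace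

abbrev E3 := EuclideanSpace ℝ (Fin 3)

/-- Escape Lemma, part (i): if `j(v) > 0` and `ν` is a unit outer-supporting vector at the
boundary point `z = x₀ + (1/j(v)) v`, then any point `x` with `x + t v ∈ D` for some
`t ≥ 2/j(v)` satisfies `|x − x₀| ≥ (t/2) j(v) dist(x₀, ∂D)`. -/
theorem escape_lemma_i
    (D : Set E3) (hD : IsOpen D) (hconv : Convex ℝ D)
    (x₀ : E3) (hx₀ : x₀ ∈ D)
    (hdist : 0 < Metric.infDist x₀ (frontier D))
    (v : E3) (j : ℝ)
    (hj : j = sInf {r : ℝ | 0 < r ∧ x₀ + r⁻¹ • v ∈ D})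
    (hjpos : 0 < j)
    (z : E3) (hz : z = x₀ + j⁻¹ • v) (hzbd : z ∈ frontier D)
    (ν : E3) (hν : ‖ν‖ = 1)
    (hsupp : ∀ y ∈ D, ⟪z, ν⟫ < ⟪y, ν⟫)
    (x : E3) (t : ℝ) (ht : 2 / j ≤ t)
    (hxt : x + t • v ∈ D) :
    (t / 2) * j * Metric.infDist x₀ (frontier D) ≤ ‖x - x₀‖ := by
  set d := Metric.infDist x₀ (frontier D) with hd
  -- the ball of radius d around x₀ is contained in D
  have hball : Metric.ball x₀ d ⊆ D := by
    have hpre : IsPreconnected (Metric.ball x₀ d) := (convex_ball x₀ d).isPreconnected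
    refine hpre.subset_left_of_subset_union hD (isOpen_compl_iff.2 isClosed_closure)
      (disjoint_compl_right.mono_left subset_closure) ?_ ⟨x₀, Metric.mem_ball_self hdist, hx₀⟩
    intro y hy
    have hyf : y ∉ frontier D := fun hyf =>
      (Metric.ball_infDist_subset_compl (s := frontier D) hy) hyf
    rw [hD.frontier_eq] at hyf
    by_cases hyc : y ∈ closure D
    · exact Or.inl (by_contra fun h => hyf ⟨hyc, h⟩)
    · exact Or.inr hyc
  -- the supporting hyperplane is at distance ≥ d from x₀
  have hzx₀ : ⟪z, ν⟫ + d ≤ ⟪x₀, ν⟫ := by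
    by_contra h
    push_neg at h
    set s : ℝ := ⟪x₀, ν⟫ - ⟪z, ν⟫ with hs
    have hs0 : 0 < s := by rw [hs]; linarith [hsupp x₀ hx₀]
    have hsd : s < d := by rw [hs]; linarith
    have hmem : x₀ - s • ν ∈ D := by
      apply hball
      simp [Metric.mem_ball, dist_eq_norm, norm_smul, abs_of_pos hs0, hν, hsd]
    have := hsupp _ hmem
    rw [inner_sub_left, real_inner_smul_left, real_inner_self_eq_norm_sq, hν, one_pow,
      mul_one, hs] at this
    linarith
  -- ⟪v, ν⟫ ≤ -j d
  have hvν : ⟪v, ν⟫ ≤ -(j * d) := by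
    have : ⟪z, ν⟫ = ⟪x₀, ν⟫ + j⁻¹ * ⟪v, ν⟫ := by
      rw [hz, inner_add_left, real_inner_smul_left]
    have hji : 0 < j⁻¹ := inv_pos.2 hjpos
    nlinarith [mul_inv_cancel₀ hjpos.ne', hjpos, hzx₀, this]
  -- support inequality at x + t v
  have hsup : ⟪z, ν⟫ < ⟪x + t • v, ν⟫ := hsupp _ hxt
  rw [inner_add_left, real_inner_smul_left] at hsup
  have hzν : ⟪z, ν⟫ = ⟪x₀, ν⟫ + j⁻¹ * ⟪v, ν⟫ := by
    rw [hz, inner_add_left, real_inner_smul_left]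
  -- ⟪x - x₀, ν⟫ ≥ (t/2) j d
  have htj : 1 / j ≤ t / 2 := by
    rw [div_le_div_iff₀ hjpos (by norm_num)]
    linarith [(div_le_iff₀ hjpos).1 ht]
  have hjinv : j⁻¹ ≤ t / 2 := by rwa [← one_div]
  have hkey : (t / 2) * (j * d) ≤ ⟪x - x₀, ν⟫ := by
    rw [inner_sub_left]
    have hjd : 0 < j * d := mul_pos hjpos hdist
    have hji : 0 < j⁻¹ := inv_pos.2 hjpos
    have h1 : t / 2 ≤ t - j⁻¹ := by linarith
    have h2 : (t - j⁻¹) * (j * d) ≤ (t - j⁻¹) * (-⟪v, ν⟫) :=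
      mul_le_mul_of_nonneg_left (by linarith) (by linarith)
    have h3 : (t / 2) * (j * d) ≤ (t - j⁻¹) * (j * d) :=
      mul_le_mul_of_nonneg_right h1 hjd.le
    have h4 : (t - j⁻¹) * (-⟪v, ν⟫) = j⁻¹ * ⟪v, ν⟫ - t * ⟪v, ν⟫ := by ring
    linarith
  calc (t / 2) * j * d ≤ ⟪x - x₀, ν⟫ := by rw [mul_assoc]; exact hkey
    _ ≤ ‖x - x₀‖ * ‖ν‖ := real_inner_le_norm _ _
    _ = ‖x - x₀‖ := by rw [hν, mul_one]
end
end

section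
/- Escape Lemma, part (ii): Let D ⊆ ℝ³ be open convex, x₀ ∈ D, b the signed distance to ∂D (positive inside D, negative outside), v ∈ ℝ³, x ∈ ℝ³, and t ≥ 0 with x + tv ∉ D. Suppose b is differentiable along the trajectory and for all s in [0, t] with x + sv ∉ D one has v·∇b(x + sv) ≥ g for some constant g > 0, and x + sv ∉ D for all s ∈ [0,t]. Then |x − x₀| ≥ t·g. -/
/-! Along the trajectory `σ ↦ b (x + σ v)` the signed distance grows at rate at least `g`, so it
gains at least `t g` between `σ = 0` and `σ = t`. It ends at a nonpositive value, since the endpoint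
lies outside `D`, and it starts at `-dist(x, D) ≥ -|x - x₀|`. -/

noncomputable section

open Set

theorem mul_sub_le_sub_of_le_hasDerivAt {f f' : ℝ → ℝ} {a b C : ℝ} (hab : a ≤ b)
    (hf : ∀ s ∈ Icc a b, HasDerivAt f (f' s) s) (hC : ∀ s ∈ Icc a b, C ≤ f' s) :
    C * (b - a) ≤ f b - f a := by
  refine (convex_Icc a b).mul_sub_le_image_sub_of_le_deriv
    (fun s hs => (hf s hs).continuousAt.continuousWithinAt) ?_ ?_ a (left_mem_Icc.2 hab) b
    (right_mem_Icc.2 hab) hab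
  · intro s hs
    rw [interior_Icc] at hs
    exact (hf s (Ioo_subset_Icc_self hs)).differentiableAt.differentiableWithinAt
  · intro s hs
    rw [interior_Icc] at hs
    rw [(hf s (Ioo_subset_Icc_self hs)).deriv]
    exact hC s (Ioo_subset_Icc_self hs)

theorem escape_lemma_ii_general
    (D : Set E3)
    (x₀ : E3) (hx₀ : x₀ ∈ D)
    (b : E3 → ℝ)
    (hb_out : ∀ x ∉ D, b x = -Metric.infDist x D)
    (v x : E3) (t : ℝ) (ht : 0 ≤ t)
    (g : ℝ)
    (hout : ∀ s ∈ Set.Icc (0 : ℝ) t, x + s • v ∉ D)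
    (d : ℝ → ℝ)
    (hderiv : ∀ s ∈ Set.Icc (0 : ℝ) t, HasDerivAt (fun σ => b (x + σ • v)) (d s) s)
    (hdg : ∀ s ∈ Set.Icc (0 : ℝ) t, g ≤ d s) :
    t * g ≤ ‖x - x₀‖ := by
  have hgain : g * (t - 0) ≤ b (x + t • v) - b (x + (0 : ℝ) • v) :=
    mul_sub_le_sub_of_le_hasDerivAt ht hderiv hdg
  have hend : b (x + t • v) ≤ 0 := by
    rw [hb_out _ (hout t (right_mem_Icc.2 ht)), neg_nonpos]
    exact Metric.infDist_nonneg
  have hstart : -b x ≤ ‖x - x₀‖ := by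
    have hx : x ∉ D := by simpa using hout 0 (left_mem_Icc.2 ht)
    rw [hb_out x hx, neg_neg, ← dist_eq_norm]
    exact Metric.infDist_le_dist_of_mem hx₀
  rw [zero_smul, add_zero, sub_zero] at hgain
  linarith

/-- Escape Lemma, part (ii): if the trajectory `x + s v` stays outside `D` on `[0, t]` and the
directional derivative of the signed distance `b` along the trajectory is bounded below by
`g > 0` there, then `|x − x₀| ≥ t g`. -/
theorem escape_lemma_ii
    (D : Set E3) (hD : IsOpen D) (hconv : Convex ℝ D)
    (x₀ : E3) (hx₀ : x₀ ∈ D)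
    (b : E3 → ℝ)
    (hb_in : ∀ x ∈ D, b x = Metric.infDist x Dᶜ)
    (hb_out : ∀ x ∉ D, b x = -Metric.infDist x D)
    (v x : E3) (t : ℝ) (ht : 0 ≤ t)
    (g : ℝ) (hg : 0 < g)
    (hout : ∀ s ∈ Set.Icc (0 : ℝ) t, x + s • v ∉ D)
    (d : ℝ → ℝ)
    (hderiv : ∀ s ∈ Set.Icc (0 : ℝ) t, HasDerivAt (fun σ => b (x + σ • v)) (d s) s)
    (hdg : ∀ s ∈ Set.Icc (0 : ℝ) t, g ≤ d s) :
    t * g ≤ ‖x - x₀‖ :=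
  escape_lemma_ii_general D x₀ hx₀ b hb_out v x t ht g hout d hderiv hdg
end
end

section
/- Moment propagation: Let S_{a,b} : [0,T] → [0,∞) for integers 0 ≤ a,b ≤ 4 satisfy S_{0,0}(t) = S_{0,0}(0) ≤ ε₀, S_{a,b}(0) ≤ ε₀, and S_{a,b}(t) ≤ S_{a,b}(0) + ∫₀ᵗ F(s)[s·a·S_{a−1,b}(s) + b·S_{a,b−1}(s)] ds, where F(s) ≤ C ε₁² (1+s²)⁻¹ log(2+s). Then for all 0 ≤ a,b ≤ 4 and t ∈ [0,T]: S_{a,b}(t) ≤ ε₀ + C' ε₀ ε₁ (log(2+t))^{2a}, for some constant C' depending only on C (assuming ε₁ ≤ 1). -/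
/-!
Induct on `a + b`. Since `log (2 + s) ≥ 1/2`, the induction hypothesis bounds every lower moment
by a multiple of `ε₀ log (2 + s) ^ (2 a')`. In the first term of the integrand the weight
`s F(s) ≲ ε₁² log (2 + s) / (2 + s)` times `log (2 + s) ^ (2 a - 2)` is, up to a constant, the
derivative of `log (2 + s) ^ (2 a)`. In the second term `F(s) ≲ ε₁² log (2 + s) / (2 + s) ^ 2`
has integral at most `ε₁²` over `[0, ∞)`, so `log (2 + s)` may be frozen at `s = t` there.
Each step multiplies `1 + K` by a factor depending only on `C`, and `ε₁² ≤ ε₁`.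
-/

open Real MeasureTheory Set intervalIntegral

lemma one_le_two_mul_log_two_add {s : ℝ} (hs : 0 ≤ s) : 1 ≤ 2 * log (2 + s) := by
  have : log 2 ≤ log (2 + s) := log_le_log (by norm_num) (by linarith)
  linarith [log_two_gt_d9]

lemma mul_inv_one_add_sq_le {s : ℝ} (hs : 0 < 2 + s) : s * (1 + s ^ 2)⁻¹ ≤ 2 / (2 + s) := by
  rw [← div_eq_mul_inv, div_le_div_iff₀ (by positivity) (by positivity)]
  nlinarith [sq_nonneg (s - 1)]

lemma inv_one_add_sq_le {s : ℝ} (hs : 0 < 2 + s) : (1 + s ^ 2)⁻¹ ≤ 5 / (2 + s) ^ 2 := by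
  rw [inv_eq_one_div, div_le_div_iff₀ (by positivity) (by positivity)]
  nlinarith [sq_nonneg (2 * s - 1)]

lemma hasDerivAt_log_two_add_pow (n : ℕ) {s : ℝ} (hs : 0 < 2 + s) :
    HasDerivAt (fun x => log (2 + x) ^ n) (n * log (2 + s) ^ (n - 1) / (2 + s)) s := by
  refine ((((hasDerivAt_id s).const_add 2).log hs.ne').fun_pow n).congr_deriv ?_
  simp only [id]
  ring

lemma hasDerivAt_neg_one_add_log_two_add_div {s : ℝ} (hs : 0 < 2 + s) :
    HasDerivAt (fun x => -((1 + log (2 + x)) / (2 + x))) (log (2 + s) / (2 + s) ^ 2) s := by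
  have h2 : HasDerivAt (fun x : ℝ => 2 + x) 1 s := (hasDerivAt_id s).const_add 2
  refine (((h2.log hs.ne').const_add 1).fun_div h2 hs.ne').fun_neg.congr_deriv ?_
  field_simp
  ring

lemma integral_le_of_le_log_kernels {φ : ℝ → ℝ} {c₁ c₂ t : ℝ} (n : ℕ) (hc₁ : 0 ≤ c₁)
    (hc₂ : 0 ≤ c₂) (ht : 0 ≤ t) (hφ : IntegrableOn φ (Icc 0 t))
    (hle : ∀ s ∈ Ioo 0 t, φ s ≤
      c₁ * (n * log (2 + s) ^ (n - 1) / (2 + s)) + c₂ * (log (2 + s) / (2 + s) ^ 2)) :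
    ∫ s in 0..t, φ s ≤ c₁ * log (2 + t) ^ n + c₂ := by
  have hderiv : ∀ s ∈ Icc 0 t,
      HasDerivAt (fun x => c₁ * log (2 + x) ^ n + c₂ * -((1 + log (2 + x)) / (2 + x)))
        (c₁ * (n * log (2 + s) ^ (n - 1) / (2 + s)) + c₂ * (log (2 + s) / (2 + s) ^ 2)) s :=
    fun s hs => have hs : 0 < 2 + s := by linarith [hs.1]
      ((hasDerivAt_log_two_add_pow n hs).const_mul c₁).add
        ((hasDerivAt_neg_one_add_log_two_add_div hs).const_mul c₂)
  have hFTC := integral_le_sub_of_hasDeriv_right_of_le ht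
    (fun s hs => (hderiv s hs).continuousAt.continuousWithinAt)
    (fun s hs => (hderiv s (Ioo_subset_Icc_self hs)).hasDerivWithinAt) hφ hle
  have hlog2 : 0 ≤ log 2 := log_nonneg (by norm_num)
  have hinit : (1 + log 2) / 2 ≤ 1 := by
    rw [div_le_one (by norm_num)]
    linarith [log_two_lt_d9]
  have hend : 0 ≤ (1 + log (2 + t)) / (2 + t) := by
    have : 0 ≤ log (2 + t) := log_nonneg (by linarith)
    positivity
  rw [add_zero] at hFTC
  linarith [mul_nonneg hc₁ (pow_nonneg hlog2 n), mul_le_mul_of_nonneg_left hinit hc₂,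
    mul_nonneg hc₂ hend]

lemma add_mul_log_pow_le {K ε₀ ε₁ s : ℝ} {a N : ℕ} (ha : a ≤ N) (hK : 0 ≤ K) (hε₀ : 0 ≤ ε₀)
    (hε₁ : ε₁ ≤ 1) (hs : 0 ≤ s) :
    ε₀ + K * ε₀ * ε₁ * log (2 + s) ^ (2 * a) ≤ 4 ^ N * (1 + K) * ε₀ * log (2 + s) ^ (2 * a) := by
  have hL := one_le_two_mul_log_two_add hs
  have hLa : 0 ≤ log (2 + s) ^ (2 * a) := pow_nonneg (by linarith) _
  have h4 : (1 : ℝ) ≤ 4 ^ N := one_le_pow₀ (by norm_num)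
  have hone : 1 ≤ 4 ^ N * log (2 + s) ^ (2 * a) :=
    calc (1 : ℝ) ≤ (2 * log (2 + s)) ^ (2 * a) := one_le_pow₀ hL
      _ = 4 ^ a * log (2 + s) ^ (2 * a) := by rw [mul_pow, pow_mul]; norm_num
      _ ≤ 4 ^ N * log (2 + s) ^ (2 * a) := by gcongr; norm_num
  have hKε : K * ε₀ * ε₁ * log (2 + s) ^ (2 * a) ≤ K * ε₀ * (4 ^ N * log (2 + s) ^ (2 * a)) := by
    rw [mul_assoc (K * ε₀)]
    gcongr
    nlinarith
  nlinarith

structure MomentSystem (N : ℕ) (C ε₀ ε₁ T : ℝ) (F : ℝ → ℝ) (S : ℕ → ℕ → ℝ → ℝ) : Prop where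
  measurable : Measurable F
  nonneg : ∀ s ∈ Icc 0 T, 0 ≤ F s
  le_decay : ∀ s ∈ Icc 0 T, F s ≤ C * ε₁ ^ 2 * (1 + s ^ 2)⁻¹ * log (2 + s)
  continuousOn : ∀ a b : ℕ, a ≤ N → b ≤ N → ContinuousOn (S a b) (Icc 0 T)
  initial_le : ∀ a b : ℕ, a ≤ N → b ≤ N → S a b 0 ≤ ε₀
  le_integral : ∀ a b : ℕ, a ≤ N → b ≤ N → ∀ t ∈ Icc 0 T,
    S a b t ≤ S a b 0 + ∫ s in (0 : ℝ)..t,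
      F s * (s * (a : ℝ) * S (a - 1) b s + (b : ℝ) * S a (b - 1) s)

def MomentBound (ε₀ ε₁ K T : ℝ) (S : ℕ → ℕ → ℝ → ℝ) (a b : ℕ) : Prop :=
  ∀ t ∈ Icc 0 T, S a b t ≤ ε₀ + K * ε₀ * ε₁ * log (2 + t) ^ (2 * a)

namespace MomentBound

variable {ε₀ ε₁ K K' T : ℝ} {S : ℕ → ℕ → ℝ → ℝ} {a b : ℕ}

lemma mono (h : MomentBound ε₀ ε₁ K T S a b) (hKK' : K ≤ K') (hε₀ : 0 ≤ ε₀) (hε₁ : 0 ≤ ε₁) :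
    MomentBound ε₀ ε₁ K' T S a b := fun t ht => by
  have : 0 ≤ log (2 + t) ^ (2 * a) := pow_nonneg (log_nonneg (by linarith [ht.1])) _
  grw [h t ht, hKK']

lemma le_four_pow_mul (h : MomentBound ε₀ ε₁ K T S a b) {N : ℕ} (ha : a ≤ N) (hK : 0 ≤ K)
    (hε₀ : 0 ≤ ε₀) (hε₁ : ε₁ ≤ 1) {s : ℝ} (hs : s ∈ Icc 0 T) :
    S a b s ≤ 4 ^ N * (1 + K) * ε₀ * log (2 + s) ^ (2 * a) :=
  (h s hs).trans (add_mul_log_pow_le ha hK hε₀ hε₁ hs.1)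

end MomentBound

def momentConstant (N : ℕ) (C : ℝ) (n : ℕ) : ℝ := (1 + 4 ^ N * (1 + 5 * N) * C) ^ n - 1

lemma momentConstant_nonneg {N : ℕ} {C : ℝ} (hC : 0 ≤ C) (n : ℕ) : 0 ≤ momentConstant N C n :=
  sub_nonneg.2 (one_le_pow₀ (by simp only [le_add_iff_nonneg_right]; positivity))

lemma momentConstant_pos {N : ℕ} {C : ℝ} (hC : 0 < C) {n : ℕ} (hn : n ≠ 0) :
    0 < momentConstant N C n :=
  sub_pos.2 (one_lt_pow₀ (by simp only [lt_add_iff_pos_right]; positivity) hn)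

namespace MomentSystem

variable {N : ℕ} {C ε₀ ε₁ T t : ℝ} {F : ℝ → ℝ} {S : ℕ → ℕ → ℝ → ℝ}

lemma integrableOn (h : MomentSystem N C ε₀ ε₁ T F S) (htT : t ≤ T) : IntegrableOn F (Icc 0 t) := by
  have hsub : Icc 0 t ⊆ Icc 0 T := Icc_subset_Icc le_rfl htT
  have hG : ContinuousOn (fun s => C * ε₁ ^ 2 * (1 + s ^ 2)⁻¹ * log (2 + s)) (Icc 0 t) := by
    refine ContinuousOn.mul (Continuous.continuousOn (by fun_prop (disch := intro; positivity)))
      (ContinuousOn.log (by fun_prop) fun s hs => ?_)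
    linarith [hs.1]
  refine hG.integrableOn_Icc.mono' h.measurable.aestronglyMeasurable
    (ae_restrict_of_forall_mem measurableSet_Icc fun s hs => ?_)
  rw [Real.norm_of_nonneg (h.nonneg s (hsub hs))]
  exact h.le_decay s (hsub hs)

lemma mul_le_log_div (h : MomentSystem N C ε₀ ε₁ T F S) (hC : 0 ≤ C) {s : ℝ} (hs : s ∈ Icc 0 T) :
    F s * s ≤ C * ε₁ ^ 2 * (2 * log (2 + s) / (2 + s)) := by
  have hL : 0 ≤ log (2 + s) := log_nonneg (by linarith [hs.1])
  calc F s * s ≤ C * ε₁ ^ 2 * (1 + s ^ 2)⁻¹ * log (2 + s) * s := by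
        gcongr
        exacts [hs.1, h.le_decay s hs]
    _ = C * ε₁ ^ 2 * log (2 + s) * (s * (1 + s ^ 2)⁻¹) := by ring
    _ ≤ C * ε₁ ^ 2 * log (2 + s) * (2 / (2 + s)) := by
        gcongr
        exact mul_inv_one_add_sq_le (by linarith [hs.1])
    _ = C * ε₁ ^ 2 * (2 * log (2 + s) / (2 + s)) := by ring

lemma le_log_div_sq (h : MomentSystem N C ε₀ ε₁ T F S) (hC : 0 ≤ C) {s : ℝ} (hs : s ∈ Icc 0 T) :
    F s ≤ 5 * C * ε₁ ^ 2 * (log (2 + s) / (2 + s) ^ 2) := by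
  have hL : 0 ≤ log (2 + s) := log_nonneg (by linarith [hs.1])
  calc F s ≤ C * ε₁ ^ 2 * (1 + s ^ 2)⁻¹ * log (2 + s) := h.le_decay s hs
    _ ≤ C * ε₁ ^ 2 * (5 / (2 + s) ^ 2) * log (2 + s) := by
        gcongr; exact inv_one_add_sq_le (by linarith [hs.1])
    _ = 5 * C * ε₁ ^ 2 * (log (2 + s) / (2 + s) ^ 2) := by ring

lemma fst_term_le (h : MomentSystem N C ε₀ ε₁ T F S) (hC : 0 ≤ C) {D s : ℝ} (hD : 0 ≤ D)
    (hs : s ∈ Icc 0 T) {a b : ℕ}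
    (hS : 0 < a → S (a - 1) b s ≤ D * log (2 + s) ^ (2 * (a - 1))) :
    F s * (s * (a : ℝ) * S (a - 1) b s) ≤
      C * ε₁ ^ 2 * D * ((2 * a : ℕ) * log (2 + s) ^ (2 * a - 1) / (2 + s)) := by
  obtain _ | a := a
  · simp
  simp only [Nat.add_sub_cancel] at hS ⊢
  have hL : 0 ≤ log (2 + s) := log_nonneg (by linarith [hs.1])
  calc F s * (s * ((a + 1 : ℕ) : ℝ) * S a b s) = F s * s * ((a + 1 : ℕ) * S a b s) := by ring
    _ ≤ F s * s * ((a + 1 : ℕ) * (D * log (2 + s) ^ (2 * a))) := by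
        gcongr
        · exact mul_nonneg (h.nonneg s hs) hs.1
        · exact hS (Nat.succ_pos a)
    _ ≤ C * ε₁ ^ 2 * (2 * log (2 + s) / (2 + s)) * ((a + 1 : ℕ) * (D * log (2 + s) ^ (2 * a))) := by
        refine mul_le_mul_of_nonneg_right (h.mul_le_log_div hC hs) ?_
        exact mul_nonneg (Nat.cast_nonneg _) (mul_nonneg hD (pow_nonneg hL _))
    _ = C * ε₁ ^ 2 * D * ((2 * (a + 1) : ℕ) * log (2 + s) ^ (2 * (a + 1) - 1) / (2 + s)) := by
        rw [show 2 * (a + 1) - 1 = 2 * a + 1 by omega]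
        push_cast
        ring

lemma snd_term_le (h : MomentSystem N C ε₀ ε₁ T F S) (hC : 0 ≤ C) {M s : ℝ} (hM : 0 ≤ M)
    (hs : s ∈ Icc 0 T) {a b : ℕ} (hS : 0 < b → S a (b - 1) s ≤ M) :
    F s * ((b : ℝ) * S a (b - 1) s) ≤ 5 * C * ε₁ ^ 2 * b * M * (log (2 + s) / (2 + s) ^ 2) := by
  obtain _ | b := b
  · simp
  simp only [Nat.add_sub_cancel] at hS ⊢
  calc F s * (((b + 1 : ℕ) : ℝ) * S a b s) ≤ F s * ((b + 1 : ℕ) * M) := by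
        gcongr
        · exact h.nonneg s hs
        · exact hS (Nat.succ_pos b)
    _ ≤ 5 * C * ε₁ ^ 2 * (log (2 + s) / (2 + s) ^ 2) * ((b + 1 : ℕ) * M) :=
        mul_le_mul_of_nonneg_right (h.le_log_div_sq hC hs) (by positivity)
    _ = 5 * C * ε₁ ^ 2 * ((b + 1 : ℕ) : ℝ) * M * (log (2 + s) / (2 + s) ^ 2) := by ring

lemma momentBound_of_forall_lt (h : MomentSystem N C ε₀ ε₁ T F S) (hC : 0 ≤ C) (hε₀ : 0 ≤ ε₀)
    (hε₁ : 0 ≤ ε₁) (hε₁' : ε₁ ≤ 1) {K : ℝ} (hK : 0 ≤ K) {a b : ℕ} (ha : a ≤ N) (hb : b ≤ N)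
    (hlower : ∀ a' b', a' + b' < a + b → a' ≤ N → b' ≤ N → MomentBound ε₀ ε₁ K T S a' b') :
    MomentBound ε₀ ε₁ (4 ^ N * (1 + 5 * N) * C * (1 + K)) T S a b := by
  intro t ht
  have hsub : Icc 0 t ⊆ Icc 0 T := Icc_subset_Icc le_rfl ht.2
  set D := 4 ^ N * (1 + K) * ε₀
  set X := log (2 + t) ^ (2 * a)
  have hD : 0 ≤ D := by positivity
  have hX : 0 ≤ X := pow_nonneg (log_nonneg (by linarith [ht.1])) _
  have hfst : ∀ s ∈ Icc 0 t, 0 < a → S (a - 1) b s ≤ D * log (2 + s) ^ (2 * (a - 1)) :=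
    fun s hs ha0 => (hlower (a - 1) b (by omega) (by omega) hb).le_four_pow_mul (by omega) hK hε₀
      hε₁' (hsub hs)
  have hsnd : ∀ s ∈ Icc 0 t, 0 < b → S a (b - 1) s ≤ D * X := fun s hs hb0 => by
    refine ((hlower a (b - 1) (by omega) ha (by omega)).le_four_pow_mul ha hK hε₀ hε₁'
      (hsub hs)).trans ?_
    have hlog : log (2 + s) ≤ log (2 + t) := log_le_log (by linarith [hs.1]) (by linarith [hs.2])
    exact mul_le_mul_of_nonneg_left (pow_le_pow_left₀ (log_nonneg (by linarith [hs.1])) hlog _) hD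
  have hint : IntegrableOn (fun s => F s * (s * (a : ℝ) * S (a - 1) b s + (b : ℝ) * S a (b - 1) s))
      (Icc 0 t) :=
    (h.integrableOn ht.2).mul_continuousOn
      (((continuousOn_id.mul continuousOn_const).mul (h.continuousOn _ b (by omega) hb)).add
        (continuousOn_const.mul (h.continuousOn a _ ha (by omega))) |>.mono hsub) isCompact_Icc
  have hintegral := integral_le_of_le_log_kernels (2 * a) (by positivity) (by positivity) ht.1 hint
    fun s hs => (mul_add _ _ _).trans_le <| add_le_add
      (h.fst_term_le hC hD (hsub (Ioo_subset_Icc_self hs)) (hfst s (Ioo_subset_Icc_self hs)))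
      (h.snd_term_le hC (mul_nonneg hD hX) (hsub (Ioo_subset_Icc_self hs))
        (hsnd s (Ioo_subset_Icc_self hs)))
  calc S a b t ≤ S a b 0 + ∫ s in 0..t, F s * (s * a * S (a - 1) b s + b * S a (b - 1) s) :=
        h.le_integral a b ha hb t ht
    _ ≤ ε₀ + (C * ε₁ ^ 2 * D * X + 5 * C * ε₁ ^ 2 * b * (D * X)) :=
        add_le_add (h.initial_le a b ha hb) hintegral
    _ = ε₀ + 4 ^ N * (1 + 5 * b) * C * (1 + K) * ε₀ * ε₁ ^ 2 * X := by ring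
    _ ≤ ε₀ + 4 ^ N * (1 + 5 * N) * C * (1 + K) * ε₀ * ε₁ * X := by
        gcongr
        nlinarith

lemma momentBound (h : MomentSystem N C ε₀ ε₁ T F S) (hC : 0 ≤ C) (hε₀ : 0 ≤ ε₀)
    (hε₁ : 0 ≤ ε₁) (hε₁' : ε₁ ≤ 1) (n : ℕ) {a b : ℕ} (hab : a + b < n) (ha : a ≤ N) (hb : b ≤ N) :
    MomentBound ε₀ ε₁ (momentConstant N C n) T S a b := by
  induction n generalizing a b with
  | zero => omega
  | succ n ih =>
    refine (h.momentBound_of_forall_lt hC hε₀ hε₁ hε₁' (momentConstant_nonneg hC n) ha hb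
      fun a' b' hlt ha' hb' => ih (by omega) ha' hb').mono ?_ hε₀ hε₁
    have := momentConstant_nonneg (N := N) hC n
    simp only [momentConstant, pow_succ] at this ⊢
    linarith

end MomentSystem

-- `S (a - 1) b` uses truncated subtraction; at `a = 0` it is multiplied by `0`, which realises the
-- convention `S_{-1,b} = 0` (and likewise for `b`).
/-- Moment propagation: from the recursive integral inequalities on the moments `S_{a,b}`
(`0 ≤ a,b ≤ 4`) and the field decay `F(s) ≤ C ε₁² (1+s²)⁻¹ log(2+s)`, one gets
`S_{a,b}(t) ≤ ε₀ + C' ε₀ ε₁ (log(2+t))^{2a}`. (Here the convention `S_{-1,b} = S_{a,-1} = 0`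
is implemented using the vanishing coefficients `a = 0`, `b = 0` and truncated `ℕ`
subtraction.) -/
theorem moment_propagation
    (C : ℝ) (hC : 0 < C) :
    ∃ C' > (0 : ℝ),
      ∀ (ε₀ ε₁ T : ℝ), 0 < ε₀ → ε₀ ≤ 1 → 0 < ε₁ → ε₁ ≤ 1 → 0 < T →
      ∀ (F : ℝ → ℝ) (S : ℕ → ℕ → ℝ → ℝ),
        Measurable F →
        (∀ s ∈ Set.Icc (0 : ℝ) T, 0 ≤ F s) →
        (∀ s ∈ Set.Icc (0 : ℝ) T,
          F s ≤ C * ε₁ ^ 2 * (1 + s ^ 2)⁻¹ * Real.log (2 + s)) →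
        (∀ a b : ℕ, a ≤ 4 → b ≤ 4 → ContinuousOn (S a b) (Set.Icc 0 T)) →
        (∀ a b : ℕ, a ≤ 4 → b ≤ 4 → ∀ t ∈ Set.Icc (0 : ℝ) T, 0 ≤ S a b t) →
        (∀ t ∈ Set.Icc (0 : ℝ) T, S 0 0 t = S 0 0 0) →
        (∀ a b : ℕ, a ≤ 4 → b ≤ 4 → S a b 0 ≤ ε₀) →
        (∀ a b : ℕ, a ≤ 4 → b ≤ 4 → ∀ t ∈ Set.Icc (0 : ℝ) T,
          S a b t ≤ S a b 0 + ∫ s in (0 : ℝ)..t,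
            F s * (s * (a : ℝ) * S (a - 1) b s + (b : ℝ) * S a (b - 1) s)) →
        ∀ a b : ℕ, a ≤ 4 → b ≤ 4 → ∀ t ∈ Set.Icc (0 : ℝ) T,
          S a b t ≤ ε₀ + C' * ε₀ * ε₁ * (Real.log (2 + t)) ^ (2 * a) := by
  refine ⟨momentConstant 4 C 9, momentConstant_pos hC (by norm_num), ?_⟩
  intro ε₀ ε₁ T hε₀ _ hε₁ hε₁' _ F S hF hF_nonneg hF_le hS_cont _ _ hS_init hS_le a b ha hb
  exact MomentSystem.momentBound ⟨hF, hF_nonneg, hF_le, hS_cont, hS_init, hS_le⟩ hC.le hε₀.le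
    hε₁.le hε₁' 9 (by omega) ha hb
end

section
/- Grazing set decay estimate: Let D ⊆ ℝ³ satisfy the grazing-measure bound |J_α ∩ {|w| = 1}| ≲ α (surface measure), where J_α = { w : j(w) < α|w| } and j is the gauge of D at x₀. Let μ : ℝ³×ℝ³ → ℝ satisfy |μ(x,v)| ≤ M ⟨x − tv⟩⁻²⟨v⟩⁻² for some t ≥ 1. Then ∫∫_{{x ∈ D, 0 < j(v) < κ}} μ²(x,v) dx dv ≤ C M² κ for all κ > 0. -/
noncomputable section

open MeasureTheory

/-- Japanese bracket `⟨y⟩ = (1 + |y|²)^{1/2}`. -/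
def jap (y : E3) : ℝ := Real.sqrt (1 + ‖y‖ ^ 2)

/-!
Squaring the hypothesis gives `μ(x,v)² ≤ M² ⟨x - tv⟩⁻⁴ ⟨v⟩⁻⁴`, and `⟨·⟩⁻⁴` is integrable on `ℝ³`,
so integrating out `x` leaves `M² ∫_{0 < j < κ} ⟨v⟩⁻⁴ dv`. The gauge `j` is positively
homogeneous, so in polar coordinates `v = r w` the radial integral runs over `r < κ / j(w)` and is
at most `4 min(1, κ / j(w))³`. Sorting the directions dyadically by `j(w) ∈ [2ⁿκ, 2ⁿ⁺¹κ)` bounds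
the angular integral by `Σ 8⁻ⁿ σ{0 < j < 2ⁿ⁺¹κ} ≲ Σ 8⁻ⁿ 2ⁿ⁺¹ κ ≲ κ`. Here the surface measure `σ`
is compared with `μH[2]` by covering the cone over a spherical set of diameter `d ≤ 1` with
`≲ 1/d` balls of radius `2d`, which gives `σ ≲ d²`.
-/

open Set Metric Module
open scoped ENNReal Pointwise

section ConeOverSphere

variable {E : Type*} [NormedAddCommGroup E] [NormedSpace ℝ E]

lemma Ioo_smul_subset_biUnion_closedBall {A : Set E} (hA : A ⊆ sphere 0 1) {w₀ : E}
    (hw₀ : w₀ ∈ A) {d : ℝ} (hd : 0 < d) (hdiam : ediam A ≤ ENNReal.ofReal d) :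
    Ioo (0 : ℝ) 1 • A ⊆ ⋃ k ∈ Finset.range (⌊d⁻¹⌋₊ + 1), closedBall ((k * d) • w₀) (2 * d) := by
  rintro _ ⟨r, ⟨hr0, hr1⟩, w, hw, rfl⟩
  have hk : ⌊r / d⌋₊ ∈ Finset.range (⌊d⁻¹⌋₊ + 1) := by
    rw [Finset.mem_range_succ_iff, ← one_div]
    exact Nat.floor_le_floor (div_le_div_of_nonneg_right hr1.le hd.le)
  refine mem_biUnion hk (mem_closedBall.2 ?_)
  set k := ⌊r / d⌋₊
  have hww₀ : dist w w₀ ≤ d :=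
    (edist_le_ofReal hd.le).1 ((edist_le_ediam_of_mem hw hw₀).trans hdiam)
  have hkd : k * d ≤ r := (le_div_iff₀ hd).1 (Nat.floor_le (by positivity))
  have hkd' : r < (k + 1) * d := (div_lt_iff₀ hd).1 (Nat.lt_floor_add_one _)
  have hw₀1 : ‖w₀‖ = 1 := mem_sphere_zero_iff_norm.1 (hA hw₀)
  calc dist (r • w) ((k * d) • w₀)
      ≤ dist (r • w) (r • w₀) + dist (r • w₀) ((k * d) • w₀) := dist_triangle _ _ _
    _ = r * dist w w₀ + |r - k * d| := by
        rw [dist_smul₀, dist_eq_norm (r • w₀), ← sub_smul, norm_smul, hw₀1,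
          Real.norm_of_nonneg hr0.le, Real.norm_eq_abs, mul_one]
    _ ≤ 1 * d + d := by
        gcongr
        rw [abs_of_nonneg (by linarith)]
        linarith
    _ = 2 * d := by ring

variable [FiniteDimensional ℝ E] [MeasurableSpace E] [BorelSpace E] (μ : Measure E)
  [μ.IsAddHaarMeasure]

lemma addHaar_Ioo_smul_le_of_ediam_le {A : Set E} (hA : A ⊆ sphere 0 1) {d : ℝ} (hd0 : 0 < d)
    (hd1 : d ≤ 1) (hdiam : ediam A ≤ ENNReal.ofReal d) :
    μ (Ioo (0 : ℝ) 1 • A) ≤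
      ENNReal.ofReal (2 ^ (finrank ℝ E + 1) * d ^ (finrank ℝ E - 1)) * μ (ball 0 1) := by
  rcases A.eq_empty_or_nonempty with rfl | ⟨w₀, hw₀⟩
  · simp
  have : Nontrivial E := ⟨⟨w₀, 0, ne_zero_of_mem_unit_sphere ⟨w₀, hA hw₀⟩⟩⟩
  obtain ⟨m, hm⟩ : ∃ m, finrank ℝ E = m + 1 := Nat.exists_eq_succ_of_ne_zero finrank_pos.ne'
  have hcount : ((⌊d⁻¹⌋₊ + 1 : ℕ) : ℝ) ≤ 2 * d⁻¹ := by
    have := Nat.floor_le (inv_nonneg.2 hd0.le)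
    have := one_le_inv₀ hd0 |>.2 hd1
    push_cast
    linarith
  calc μ (Ioo (0 : ℝ) 1 • A)
      ≤ ∑ k ∈ Finset.range (⌊d⁻¹⌋₊ + 1), μ (closedBall ((k * d) • w₀) (2 * d)) :=
        (measure_mono (Ioo_smul_subset_biUnion_closedBall hA hw₀ hd0 hdiam)).trans
          (measure_biUnion_finset_le _ _)
    _ = ((⌊d⁻¹⌋₊ + 1 : ℕ) : ℝ≥0∞) * ENNReal.ofReal ((2 * d) ^ finrank ℝ E) * μ (ball 0 1) := by
        simp only [μ.addHaar_closedBall _ (by positivity : (0 : ℝ) ≤ 2 * d), Finset.sum_const,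
          Finset.card_range, nsmul_eq_mul, mul_assoc]
    _ ≤ ENNReal.ofReal (2 * d⁻¹ * (2 * d) ^ finrank ℝ E) * μ (ball 0 1) := by
        rw [← ENNReal.ofReal_natCast, ← ENNReal.ofReal_mul (by positivity)]
        gcongr
    _ = ENNReal.ofReal (2 ^ (finrank ℝ E + 1) * d ^ (finrank ℝ E - 1)) * μ (ball 0 1) := by
        rw [hm, Nat.add_sub_cancel]
        congr 2
        field_simp
        ring

lemma addHaar_Ioo_smul_eq_zero_of_ediam_eq_zero (hn : 2 ≤ finrank ℝ E) {A : Set E}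
    (hA : ediam A = 0) : μ (Ioo (0 : ℝ) 1 • A) = 0 := by
  rcases A.eq_empty_or_nonempty with rfl | ⟨w₀, hw₀⟩
  · simp
  refine measure_mono_null ?_ (μ.addHaar_submodule (ℝ ∙ w₀) fun htop => ?_)
  · rintro _ ⟨r, -, w, hw, rfl⟩
    rw [(ediam_eq_zero_iff.1 hA) hw hw₀]
    exact Submodule.smul_mem _ _ (Submodule.mem_span_singleton_self w₀)
  · have := finrank_span_le_card (R := ℝ) ({w₀} : Set E)
    rw [htop, finrank_top] at this
    simp at this
    omega

lemma addHaar_Ioo_smul_le (hn : 2 ≤ finrank ℝ E) {A : Set E} (hA : A ⊆ sphere 0 1)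
    (hdiam : ediam A ≤ 1) :
    μ (Ioo (0 : ℝ) 1 • A) ≤ 2 ^ (finrank ℝ E + 1) * μ (ball 0 1) * ediam A ^ (finrank ℝ E - 1) := by
  rcases eq_or_ne (ediam A) 0 with h0 | h0
  · simp [addHaar_Ioo_smul_eq_zero_of_ediam_eq_zero μ hn h0]
  have hA_top : ediam A ≠ ⊤ := ne_top_of_le_ne_top ENNReal.one_ne_top hdiam
  have hd0 : 0 < (ediam A).toReal := ENNReal.toReal_pos h0 hA_top
  have hd1 : (ediam A).toReal ≤ 1 :=
    ENNReal.toReal_le_of_le_ofReal zero_le_one (by simpa using hdiam)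
  refine (addHaar_Ioo_smul_le_of_ediam_le μ hA hd0 hd1 (ENNReal.ofReal_toReal hA_top).ge).trans
    (le_of_eq ?_)
  rw [ENNReal.ofReal_mul (by positivity), ENNReal.ofReal_pow hd0.le, ENNReal.ofReal_toReal hA_top,
    ENNReal.ofReal_pow zero_le_two, ENNReal.ofReal_ofNat]
  ring

theorem MeasureTheory.Measure.toSphere_le_smul_hausdorffMeasure (hn : 2 ≤ finrank ℝ E) :
    μ.toSphere ≤
      (finrank ℝ E * 2 ^ (finrank ℝ E + 1) * μ (ball 0 1)) • μH[(finrank ℝ E - 1 : ℕ)] := by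
  set c : ℝ≥0∞ := finrank ℝ E * 2 ^ (finrank ℝ E + 1) * μ (ball 0 1)
  have hc0 : c ≠ 0 := by
    have := (measure_ball_pos μ (0 : E) one_pos).ne'
    simp [c, this]
    omega
  have hc_top : c ≠ ⊤ := by finiteness
  refine (Measure.le_mkMetric (c • fun r => r ^ ((finrank ℝ E - 1 : ℕ) : ℝ)) _ 1 one_pos
    fun s hs => ?_).trans
    (Measure.mkMetric_mono_smul hc_top hc0 (Filter.Eventually.of_forall fun _ => le_rfl))
  have hdiam : ediam ((↑) '' closure s : Set E) = ediam s := by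
    rw [isometry_subtype_coe.ediam_image, ediam_closure]
  calc μ.toSphere s ≤ μ.toSphere (closure s) := measure_mono subset_closure
    _ = finrank ℝ E * μ (Ioo (0 : ℝ) 1 • ((↑) '' closure s)) :=
        μ.toSphere_apply' isClosed_closure.measurableSet
    _ ≤ finrank ℝ E * (2 ^ (finrank ℝ E + 1) * μ (ball 0 1) * ediam s ^ (finrank ℝ E - 1)) := by
        rw [← hdiam]
        gcongr
        exact addHaar_Ioo_smul_le μ hn (Subtype.coe_image_subset _ _) (hdiam ▸ hs)
    _ = c * ediam s ^ ((finrank ℝ E - 1 : ℕ) : ℝ) := by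
        rw [ENNReal.rpow_natCast]
        ring

end ConeOverSphere

section PolarCoordinates

variable {E : Type*} [NormedAddCommGroup E] [NormedSpace ℝ E] [FiniteDimensional ℝ E]
  [Nontrivial E] [MeasurableSpace E] [BorelSpace E] (μ : Measure E) [μ.IsAddHaarMeasure]

theorem lintegral_eq_lintegral_toSphere_lintegral_Ioi {f : E → ℝ≥0∞} (hf : Measurable f) :
    ∫⁻ x, f x ∂μ = ∫⁻ w, (∫⁻ r in Ioi (0 : ℝ),
      ENNReal.ofReal (r ^ (finrank ℝ E - 1)) * f (r • (w : E))) ∂μ.toSphere := by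
  set g : sphere (0 : E) 1 × Ioi (0 : ℝ) → ℝ≥0∞ := fun p => f ((p.2 : ℝ) • (p.1 : E))
  have hg : Measurable g := hf.comp (by fun_prop)
  calc ∫⁻ x, f x ∂μ = ∫⁻ x in ({0}ᶜ : Set E), f x ∂μ := by rw [restrict_compl_singleton]
    _ = ∫⁻ x : ({0}ᶜ : Set E), f x ∂(μ.comap Subtype.val) :=
        (lintegral_subtype_comap (measurableSet_singleton 0).compl _).symm
    _ = ∫⁻ x : ({0}ᶜ : Set E), g (homeomorphUnitSphereProd E x) ∂(μ.comap Subtype.val) := by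
        congr with x
        simp [g, smul_inv_smul₀ (norm_ne_zero_iff.2 x.2)]
    _ = ∫⁻ p, g p ∂(μ.toSphere.prod (Measure.volumeIoiPow (finrank ℝ E - 1))) :=
        μ.measurePreserving_homeomorphUnitSphereProd.lintegral_comp hg
    _ = _ := by
        rw [lintegral_prod g hg.aemeasurable]
        congr with w
        rw [Measure.volumeIoiPow, lintegral_withDensity_eq_lintegral_mul _ (by fun_prop)
          (by fun_prop)]
        exact lintegral_subtype_comap measurableSet_Ioi
          (fun r => ENNReal.ofReal (r ^ (finrank ℝ E - 1)) * f (r • (w : E)))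

-- For `a ≤ 0` both sides fail, the right one because then `κ / a ≤ 0`.
lemma pos_mul_lt_iff_lt_div {r a κ : ℝ} (hr : 0 < r) (hκ : 0 < κ) :
    0 < r * a ∧ r * a < κ ↔ r < κ / a := by
  rcases le_or_gt a 0 with ha | ha
  · exact iff_of_false (fun h => (mul_nonpos_of_nonneg_of_nonpos hr.le ha).not_gt h.1)
      fun h => (h.trans_le (div_nonpos_of_nonneg_of_nonpos hκ.le ha)).not_gt hr
  · rw [lt_div_iff₀ ha]
    exact and_iff_right (mul_pos hr ha)

theorem setLIntegral_sublevel_eq_lintegral_toSphere {g : E → ℝ} (hg : Measurable g)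
    (hg_smul : ∀ c > 0, ∀ v, g (c • v) = c * g v) {f : ℝ → ℝ≥0∞} (hf : Measurable f) {κ : ℝ}
    (hκ : 0 < κ) :
    ∫⁻ v in {v | 0 < g v ∧ g v < κ}, f ‖v‖ ∂μ = ∫⁻ w, (∫⁻ r in Ioo 0 (κ / g w),
      ENNReal.ofReal (r ^ (finrank ℝ E - 1)) * f r) ∂μ.toSphere := by
  have hV : MeasurableSet {v | 0 < g v ∧ g v < κ} :=
    (measurableSet_lt measurable_const hg).inter (measurableSet_lt hg measurable_const)
  have hfV : Measurable ({v | 0 < g v ∧ g v < κ}.indicator fun v => f ‖v‖) :=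
    (hf.comp measurable_norm).indicator hV
  rw [← lintegral_indicator hV, lintegral_eq_lintegral_toSphere_lintegral_Ioi μ hfV]
  congr with w
  rw [← Iio_inter_Ioi, ← Measure.restrict_restrict measurableSet_Iio,
    ← lintegral_indicator measurableSet_Iio]
  refine setLIntegral_congr_fun measurableSet_Ioi fun r (hr : 0 < r) => ?_
  have hnorm : ‖r • (w : E)‖ = r := by
    rw [norm_smul, norm_eq_of_mem_sphere w, mul_one, Real.norm_of_nonneg hr.le]
  have hmem : r • (w : E) ∈ {v | 0 < g v ∧ g v < κ} ↔ r ∈ Iio (κ / g w) := by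
    simp only [mem_ofPred_eq, mem_Iio, hg_smul r hr, pos_mul_lt_iff_lt_div hr hκ]
  by_cases h : r ∈ Iio (κ / g w)
  · rw [indicator_of_mem (hmem.2 h), indicator_of_mem h, hnorm]
  · rw [indicator_of_notMem (mt hmem.1 h), indicator_of_notMem h, mul_zero]

end PolarCoordinates

lemma lintegral_Ioo_sq_mul_inv_one_add_sq_sq_le (R : ℝ) :
    ∫⁻ r in Ioo 0 R, ENNReal.ofReal (r ^ 2) * ENNReal.ofReal (((1 + r ^ 2) ^ 2)⁻¹) ≤
      4 * ENNReal.ofReal (min 1 R ^ 3) := by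
  rcases le_total 1 R with hR | hR
  · have hle : ∀ r : ℝ, ENNReal.ofReal (r ^ 2) * ENNReal.ofReal (((1 + r ^ 2) ^ 2)⁻¹) ≤
        ENNReal.ofReal (1 + r ^ 2)⁻¹ := fun r => by
      rw [← ENNReal.ofReal_mul (sq_nonneg r)]
      refine ENNReal.ofReal_le_ofReal ?_
      rw [← div_eq_mul_inv, div_le_iff₀ (by positivity)]
      field_simp
      linarith
    calc _ ≤ ∫⁻ r, ENNReal.ofReal (1 + r ^ 2)⁻¹ :=
          (setLIntegral_le_lintegral _ _).trans (lintegral_mono hle)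
      _ = ENNReal.ofReal Real.pi := by
          rw [← ofReal_integral_eq_lintegral_ofReal integrable_inv_one_add_sq
            (ae_of_all _ fun r => by positivity), integral_univ_inv_one_add_sq]
      _ ≤ 4 * ENNReal.ofReal (min 1 R ^ 3) := by
          rw [min_eq_left hR, one_pow, ENNReal.ofReal_one, mul_one, ← ENNReal.ofReal_ofNat]
          exact ENNReal.ofReal_le_ofReal Real.pi_le_four
  rcases le_total R 0 with hR0 | hR0
  · simp [Ioo_eq_empty (not_lt.2 hR0)]
  rw [min_eq_right hR]
  calc _ ≤ ∫⁻ r in Ioo 0 R, ENNReal.ofReal (R ^ 2) := by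
        refine setLIntegral_mono measurable_const fun r hr => ?_
        rw [← ENNReal.ofReal_mul (sq_nonneg r)]
        refine ENNReal.ofReal_le_ofReal ?_
        have : ((1 + r ^ 2) ^ 2)⁻¹ ≤ 1 := inv_le_one_of_one_le₀ (by nlinarith)
        nlinarith [hr.1, hr.2]
    _ = ENNReal.ofReal (R ^ 3) := by
        rw [setLIntegral_const, Real.volume_Ioo, sub_zero, ← ENNReal.ofReal_mul (sq_nonneg R),
          ← pow_succ]
    _ ≤ 4 * ENNReal.ofReal (R ^ 3) := le_mul_of_one_le_left' (by norm_num)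

lemma exists_min_one_div_le_and_lt_two_pow {κ a : ℝ} (hκ : 0 < κ) :
    ∃ n : ℕ, min 1 (κ / a) ≤ (2 ^ n)⁻¹ ∧ a < κ * 2 ^ (n + 1) := by
  obtain ⟨n, hn, hn'⟩ := exists_nat_pow_near (le_max_left 1 (a / κ)) one_lt_two
  refine ⟨n, ?_, ?_⟩
  · rcases le_max_iff.1 hn with h | h
    · exact (min_le_left _ _).trans ((one_le_inv₀ (by positivity)).2 h)
    · rw [← inv_div]
      exact (min_le_right _ _).trans (inv_anti₀ (by positivity) h)
  · rw [mul_comm, ← div_lt_iff₀ hκ]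
    exact (le_max_right _ _).trans_lt hn'

lemma ofReal_min_one_div_pow_three_le_tsum_indicator {X : Type*} (g : X → ℝ) {κ : ℝ}
    (hκ : 0 < κ) (x : X) :
    ENNReal.ofReal (min 1 (κ / g x) ^ 3) ≤
      ∑' n, {x | 0 < g x ∧ g x < κ * 2 ^ (n + 1)}.indicator (fun _ => 8⁻¹ ^ n) x := by
  rcases le_or_gt (g x) 0 with hx | hx
  · rw [ENNReal.ofReal_eq_zero.2 ((Odd.pow_nonpos_iff (by decide)).2
      ((min_le_right _ _).trans (div_nonpos_of_nonneg_of_nonpos hκ.le hx)))]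
    exact zero_le
  obtain ⟨n, hmin, hlt⟩ := exists_min_one_div_le_and_lt_two_pow (a := g x) hκ
  refine le_trans ?_ (ENNReal.le_tsum n)
  rw [indicator_of_mem (show x ∈ {x | 0 < g x ∧ g x < κ * 2 ^ (n + 1)} from ⟨hx, hlt⟩),
    ← ENNReal.inv_pow, ← ENNReal.ofReal_ofNat, ← ENNReal.ofReal_pow (by norm_num),
    ← ENNReal.ofReal_inv_of_pos (by positivity)]
  refine ENNReal.ofReal_le_ofReal ?_
  calc min 1 (κ / g x) ^ 3 ≤ ((2 ^ n)⁻¹) ^ 3 := by gcongr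
    _ = ((8 : ℝ) ^ n)⁻¹ := by rw [inv_pow, ← pow_mul, mul_comm, pow_mul]; norm_num

theorem lintegral_min_one_div_pow_three_le {X : Type*} [MeasurableSpace X] (ν : Measure X)
    {g : X → ℝ} (hg : Measurable g) {A : ℝ≥0∞}
    (hA : ∀ β > 0, ν {x | 0 < g x ∧ g x < β} ≤ A * ENNReal.ofReal β) {κ : ℝ} (hκ : 0 < κ) :
    ∫⁻ x, ENNReal.ofReal (min 1 (κ / g x) ^ 3) ∂ν ≤ 4 * A * ENNReal.ofReal κ := by
  set S : ℕ → Set X := fun n => {x | 0 < g x ∧ g x < κ * 2 ^ (n + 1)}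
  have hS : ∀ n, MeasurableSet (S n) := fun n =>
    (measurableSet_lt measurable_const hg).inter (measurableSet_lt hg measurable_const)
  have hterm : ∀ n : ℕ, (8 : ℝ≥0∞)⁻¹ ^ n * ν (S n) ≤ 2 * A * ENNReal.ofReal κ * 4⁻¹ ^ n := by
    intro n
    have h82 : (8 : ℝ≥0∞)⁻¹ * 2 = 4⁻¹ := by
      rw [show (8 : ℝ≥0∞) = 4 * 2 by norm_num, ENNReal.mul_inv (by simp) (by simp), mul_assoc,
        ENNReal.inv_mul_cancel (by simp) (by simp), mul_one]
    calc _ ≤ 8⁻¹ ^ n * (A * ENNReal.ofReal (κ * 2 ^ (n + 1))) := by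
          gcongr
          exact hA _ (by positivity)
      _ = 2 * A * ENNReal.ofReal κ * (8⁻¹ * 2) ^ n := by
          rw [ENNReal.ofReal_mul hκ.le, ENNReal.ofReal_pow zero_le_two, ENNReal.ofReal_ofNat,
            mul_pow]
          ring
      _ = _ := by rw [h82]
  calc ∫⁻ x, ENNReal.ofReal (min 1 (κ / g x) ^ 3) ∂ν
      ≤ ∫⁻ x, ∑' n, (S n).indicator (fun _ => 8⁻¹ ^ n) x ∂ν :=
        lintegral_mono (ofReal_min_one_div_pow_three_le_tsum_indicator g hκ)
    _ = ∑' n, 8⁻¹ ^ n * ν (S n) := by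
        rw [lintegral_tsum fun n => (measurable_const.indicator (hS n)).aemeasurable]
        exact tsum_congr fun n => lintegral_indicator_const (hS n) _
    _ ≤ ∑' n, 2 * A * ENNReal.ofReal κ * 4⁻¹ ^ n := ENNReal.tsum_le_tsum hterm
    _ = 2 * A * ENNReal.ofReal κ * ∑' n, (4 : ℝ≥0∞)⁻¹ ^ n := ENNReal.tsum_mul_left
    _ ≤ 2 * A * ENNReal.ofReal κ * ∑' n, (2 : ℝ≥0∞)⁻¹ ^ n := by
        gcongr with n
        norm_num
    _ = 4 * A * ENNReal.ofReal κ := by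
        rw [ENNReal.tsum_geometric, ENNReal.one_sub_inv_two, inv_inv]
        ring

lemma gauge_neg_vadd_eq_sInf {E : Type*} [AddCommGroup E] [Module ℝ E] (D : Set E) (x₀ v : E) :
    gauge (-x₀ +ᵥ D) v = sInf {r : ℝ | 0 < r ∧ x₀ + r⁻¹ • v ∈ D} := by
  rw [gauge_def']
  congr 1
  ext r
  simp [mem_vadd_set_iff_neg_vadd_mem]

lemma lintegral_inv_one_add_norm_sq_sq_ne_top {E : Type*} [NormedAddCommGroup E]
    [NormedSpace ℝ E] [FiniteDimensional ℝ E] [MeasurableSpace E] [BorelSpace E] (μ : Measure E)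
    [μ.IsAddHaarMeasure] (hE : finrank ℝ E < 4) :
    ∫⁻ x, ENNReal.ofReal (((1 + ‖x‖ ^ 2) ^ 2)⁻¹) ∂μ ≠ ⊤ := by
  have h := integrable_rpow_neg_one_add_norm_sq (μ := μ) (r := 4) (by exact_mod_cast hE)
  refine (lintegral_congr fun x => ?_).trans_ne h.lintegral_lt_top.ne
  rw [show -(4 : ℝ) / 2 = -(2 : ℕ) by norm_num, Real.rpow_neg (by positivity), Real.rpow_natCast]

lemma lintegral_prod_comp_sub_mul {G Y : Type*} [MeasurableSpace G] [AddGroup G]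
    [MeasurableAdd G] [MeasurableSub₂ G] [MeasurableSpace Y] (μ : Measure G) (ν : Measure Y)
    [SFinite μ] [SFinite ν] [μ.IsAddRightInvariant] {F : G → ℝ≥0∞} {H : Y → ℝ≥0∞}
    (hF : Measurable F) (hH : Measurable H) {φ : Y → G} (hφ : Measurable φ) :
    ∫⁻ p, F (p.1 - φ p.2) * H p.2 ∂(μ.prod ν) = (∫⁻ x, F x ∂μ) * ∫⁻ y, H y ∂ν := by
  rw [lintegral_prod_symm _ (by fun_prop), ← lintegral_const_mul _ hH]
  congr with y
  dsimp only
  rw [lintegral_mul_const _ (by fun_prop), lintegral_sub_right_eq_self F (φ y)]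

lemma jap_sq (y : E3) : jap y ^ 2 = 1 + ‖y‖ ^ 2 := Real.sq_sqrt (by positivity)

lemma sq_le_of_abs_le_div_jap_sq {a M : ℝ} {x v : E3} (h : |a| ≤ M / (jap x ^ 2 * jap v ^ 2)) :
    a ^ 2 ≤ M ^ 2 * (((1 + ‖x‖ ^ 2) ^ 2)⁻¹ * ((1 + ‖v‖ ^ 2) ^ 2)⁻¹) := by
  rw [jap_sq, jap_sq] at h
  calc a ^ 2 = |a| ^ 2 := (sq_abs a).symm
    _ ≤ (M / ((1 + ‖x‖ ^ 2) * (1 + ‖v‖ ^ 2))) ^ 2 := pow_le_pow_left₀ (abs_nonneg a) h 2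
    _ = M ^ 2 * (((1 + ‖x‖ ^ 2) ^ 2)⁻¹ * ((1 + ‖v‖ ^ 2) ^ 2)⁻¹) := by field_simp

lemma setLIntegral_prod_sq_le {μ : E3 → E3 → ℝ} {M t : ℝ}
    (hμ : ∀ x v : E3, |μ x v| ≤ M / ((jap (x - t • v)) ^ 2 * (jap v) ^ 2)) (s V : Set E3) :
    ∫⁻ p in s ×ˢ V, ENNReal.ofReal ‖μ p.1 p.2 ^ 2‖ ≤ ENNReal.ofReal (M ^ 2) *
      ((∫⁻ x : E3, ENNReal.ofReal (((1 + ‖x‖ ^ 2) ^ 2)⁻¹)) *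
        ∫⁻ v in V, ENNReal.ofReal (((1 + ‖v‖ ^ 2) ^ 2)⁻¹)) := by
  set w : E3 → ℝ≥0∞ := fun y => ENNReal.ofReal (((1 + ‖y‖ ^ 2) ^ 2)⁻¹)
  have hw : Measurable w := by fun_prop
  calc ∫⁻ p in s ×ˢ V, ENNReal.ofReal ‖μ p.1 p.2 ^ 2‖
      ≤ ∫⁻ p in univ ×ˢ V, ENNReal.ofReal (M ^ 2) * (w (p.1 - t • p.2) * w p.2) := by
        refine (lintegral_mono fun p => ?_).trans
          (lintegral_mono_set (prod_mono (subset_univ s) subset_rfl))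
        rw [Real.norm_of_nonneg (sq_nonneg _), ← ENNReal.ofReal_mul (by positivity),
          ← ENNReal.ofReal_mul (sq_nonneg M)]
        exact ENNReal.ofReal_le_ofReal (sq_le_of_abs_le_div_jap_sq (hμ p.1 p.2))
    _ = ENNReal.ofReal (M ^ 2) * ((∫⁻ x, w x) * ∫⁻ v in V, w v) := by
        rw [lintegral_const_mul _ (by fun_prop), Measure.volume_eq_prod, ← Measure.prod_restrict,
          Measure.restrict_univ, lintegral_prod_comp_sub_mul _ _ hw hw (by fun_prop)]

theorem exists_setLIntegral_sublevel_le {j : E3 → ℝ} (hj : Measurable j)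
    (hj_smul : ∀ c > 0, ∀ v, j (c • v) = c * j v) {C₀ : ℝ}
    (hgraze : ∀ κ : ℝ, 0 < κ →
      μH[2] {v : E3 | ‖v‖ = 1 ∧ 0 < j v ∧ j v < κ} ≤ ENNReal.ofReal (C₀ * κ)) :
    ∃ A ≠ ⊤, ∀ κ > 0, ∫⁻ v in {v | 0 < j v ∧ j v < κ},
      ENNReal.ofReal (((1 + ‖v‖ ^ 2) ^ 2)⁻¹) ≤ A * ENNReal.ofReal κ := by
  have hdim : finrank ℝ E3 = 3 := finrank_euclideanSpace_fin
  set c : ℝ≥0∞ := 3 * 2 ^ 4 * volume (ball (0 : E3) 1)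
  have hc : (volume : Measure E3).toSphere ≤ c • μH[2] := by
    simpa only [hdim, Nat.reduceAdd, Nat.reduceSub, Nat.cast_ofNat] using
      (volume : Measure E3).toSphere_le_smul_hausdorffMeasure (by rw [hdim]; norm_num)
  have hsphere : ∀ β > 0, (volume : Measure E3).toSphere {w | 0 < j w ∧ j w < β} ≤
      c * ENNReal.ofReal C₀ * ENNReal.ofReal β := fun β hβ => by
    have himage : ((↑) '' {w : sphere (0 : E3) 1 | 0 < j w ∧ j w < β} : Set E3) =
        {v | ‖v‖ = 1 ∧ 0 < j v ∧ j v < β} := by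
      ext v
      simp only [mem_image, mem_ofPred_eq, Subtype.exists, mem_sphere_iff_norm, sub_zero,
        exists_and_left, exists_prop, exists_eq_right_right]
      tauto
    calc _ ≤ c * μH[2] {w : sphere (0 : E3) 1 | 0 < j w ∧ j w < β} := hc _
      _ ≤ c * ENNReal.ofReal (C₀ * β) := by
          rw [← isometry_subtype_coe.hausdorffMeasure_image (Or.inl zero_le_two), himage]
          gcongr
          exact hgraze β hβ
      _ = c * ENNReal.ofReal C₀ * ENNReal.ofReal β := by rw [ENNReal.ofReal_mul' hβ.le, ← mul_assoc]
  refine ⟨16 * (c * ENNReal.ofReal C₀), by finiteness, fun κ hκ => ?_⟩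
  rw [setLIntegral_sublevel_eq_lintegral_toSphere volume hj hj_smul
    (f := fun s => ENNReal.ofReal (((1 + s ^ 2) ^ 2)⁻¹)) (by fun_prop) hκ, hdim]
  calc _ ≤ ∫⁻ w, 4 * ENNReal.ofReal (min 1 (κ / j w) ^ 3) ∂(volume : Measure E3).toSphere :=
        lintegral_mono fun w => lintegral_Ioo_sq_mul_inv_one_add_sq_sq_le _
    _ ≤ 4 * (4 * (c * ENNReal.ofReal C₀) * ENNReal.ofReal κ) := by
        rw [lintegral_const_mul _ (by fun_prop)]
        gcongr
        exact lintegral_min_one_div_pow_three_le _ (hj.comp measurable_subtype_coe) hsphere hκ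
    _ = 16 * (c * ENNReal.ofReal C₀) * ENNReal.ofReal κ := by ring

theorem grazing_set_decay_general
    (D : Set E3) (hD : IsOpen D) (hconv : Convex ℝ D)
    (x₀ : E3) (hx₀ : x₀ ∈ D)
    (j : E3 → ℝ)
    (hj : ∀ v, j v = sInf {r : ℝ | 0 < r ∧ x₀ + r⁻¹ • v ∈ D})
    (C₀ : ℝ)
    (hmeas : ∀ κ : ℝ, 0 < κ →
      μH[2] {v : E3 | ‖v‖ = 1 ∧ 0 < j v ∧ j v < κ} ≤ ENNReal.ofReal (C₀ * κ))
    (M t : ℝ)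
    (μ : E3 → E3 → ℝ)
    (hμ : ∀ x v : E3, |μ x v| ≤ M / ((jap (x - t • v)) ^ 2 * (jap v) ^ 2)) :
    ∃ C > (0 : ℝ), ∀ κ : ℝ, 0 < κ →
      (∫ p in (D ×ˢ {v : E3 | 0 < j v ∧ j v < κ}), (μ p.1 p.2) ^ 2) ≤ C * M ^ 2 * κ := by
  have hj_gauge : j = gauge (-x₀ +ᵥ D) :=
    funext fun v => (hj v).trans (gauge_neg_vadd_eq_sInf D x₀ v).symm
  have hD₀ : -x₀ +ᵥ D ∈ nhds (0 : E3) := (hD.vadd (-x₀)).mem_nhds ⟨x₀, hx₀, by simp⟩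
  have hj_meas : Measurable j := hj_gauge ▸ (continuous_gauge (hconv.vadd _) hD₀).measurable
  have hj_smul : ∀ c > 0, ∀ v, j (c • v) = c * j v := fun c hc v => by
    rw [hj_gauge, gauge_smul_of_nonneg hc.le, smul_eq_mul]
  obtain ⟨A, hA_top, hA⟩ := exists_setLIntegral_sublevel_le hj_meas hj_smul hmeas
  set W := ∫⁻ x : E3, ENNReal.ofReal (((1 + ‖x‖ ^ 2) ^ 2)⁻¹)
  have hW : W ≠ ⊤ := lintegral_inv_one_add_norm_sq_sq_ne_top _ (by simp)
  refine ⟨(W * A).toReal + 1, by positivity, fun κ hκ => ?_⟩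
  have hC : 0 ≤ ((W * A).toReal + 1) * M ^ 2 * κ := by positivity
  refine (Real.le_norm_self _).trans <| (norm_integral_le_lintegral_norm _).trans <|
    ENNReal.toReal_le_of_le_ofReal hC ?_
  calc _ ≤ ENNReal.ofReal (M ^ 2) * (W * ∫⁻ v in {v | 0 < j v ∧ j v < κ},
        ENNReal.ofReal (((1 + ‖v‖ ^ 2) ^ 2)⁻¹)) := setLIntegral_prod_sq_le hμ _ _
    _ ≤ ENNReal.ofReal (M ^ 2) * (W * (A * ENNReal.ofReal κ)) := by grw [hA κ hκ]
    _ = ENNReal.ofReal ((W * A).toReal * M ^ 2 * κ) := by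
        rw [ENNReal.ofReal_mul (by positivity), ENNReal.ofReal_mul ENNReal.toReal_nonneg,
          ENNReal.ofReal_toReal (by finiteness)]
        ring
    _ ≤ ENNReal.ofReal (((W * A).toReal + 1) * M ^ 2 * κ) := by gcongr; linarith

/-- Grazing set decay estimate: if the grazing set on the unit sphere has surface measure
`≲ κ` and `|μ(x,v)| ≤ M ⟨x − tv⟩⁻² ⟨v⟩⁻²`, then
`∫∫_{x ∈ D, 0 < j(v) < κ} μ² dx dv ≤ C M² κ`. -/
theorem grazing_set_decay
    (D : Set E3) (hD : IsOpen D) (hconv : Convex ℝ D)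
    (x₀ : E3) (hx₀ : x₀ ∈ D)
    (j : E3 → ℝ)
    (hj : ∀ v, j v = sInf {r : ℝ | 0 < r ∧ x₀ + r⁻¹ • v ∈ D})
    (C₀ : ℝ) (hC₀ : 0 < C₀)
    (hmeas : ∀ κ : ℝ, 0 < κ →
      μH[2] {v : E3 | ‖v‖ = 1 ∧ 0 < j v ∧ j v < κ} ≤ ENNReal.ofReal (C₀ * κ))
    (M t : ℝ) (hM : 0 < M) (ht : 1 ≤ t)
    (μ : E3 → E3 → ℝ) (hμmeas : Measurable (Function.uncurry μ))
    (hμ : ∀ x v : E3, |μ x v| ≤ M / ((jap (x - t • v)) ^ 2 * (jap v) ^ 2)) :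
    ∃ C > (0 : ℝ), ∀ κ : ℝ, 0 < κ →
      (∫ p in (D ×ˢ {v : E3 | 0 < j v ∧ j v < κ}), (μ p.1 p.2) ^ 2) ≤ C * M ^ 2 * κ :=
  grazing_set_decay_general D hD hconv x₀ hx₀ j hj C₀ hmeas M t μ hμ
end
end

section
/- Scale-decomposition bound: Let γ : ℝ³ × ℝ³ → ℝ with N₁ := ‖⟨z⟩⁴⟨w⟩⁴ γ‖²_{L∞} < ∞, and let G be a function satisfying |G(x,y)| ≤ C/|x−y| and |∇_x G(x,y)| ≤ C/|x−y|² for x ≠ y. Define, for R > 0 and t ≥ 0, E_R(x,t) := R² ∫∫ |∇_x[φ(R⁻¹(x − z − tw)) G(x, z+tw)]| γ²(z,w) dz dw, where φ ∈ C_c^∞ is supported in { 1/4 ≤ |u| ≤ 4 }. Then E_R(x,t) ≤ C' min{1, (R/⟨t⟩)³} N₁. -/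
noncomputable section

open MeasureTheory

/-- Japanese bracket for scalars. -/
def japR (r : ℝ) : ℝ := Real.sqrt (1 + r ^ 2)

namespace ScaleDecompAux

/-- The weight `(1+‖z‖²)⁻⁴ = ⟨z⟩⁻⁸`. -/
def hfun (z : E3) : ℝ := ((1 + ‖z‖ ^ 2) ^ 4)⁻¹

lemma hfun_nonneg (z : E3) : 0 ≤ hfun z := by unfold hfun; positivity

lemma hfun_le_one (z : E3) : hfun z ≤ 1 := by
  unfold hfun
  have h : (1:ℝ) ≤ 1 + ‖z‖ ^ 2 := by nlinarith [sq_nonneg ‖z‖]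
  have h4 : (1:ℝ) ≤ (1 + ‖z‖ ^ 2) ^ 4 := by
    calc (1:ℝ) = 1 ^ 4 := by norm_num
      _ ≤ (1 + ‖z‖ ^ 2) ^ 4 := by gcongr
  exact inv_le_one_of_one_le₀ h4

lemma hfun_integrable : Integrable hfun (volume : Measure E3) := by
  have hnr : ((Module.finrank ℝ E3 : ℝ)) < (8:ℝ) := by
    simp [finrank_euclideanSpace_fin]; norm_num
  have h := integrable_rpow_neg_one_add_norm_sq (E := E3) (μ := volume) hnr
  refine h.congr (Filter.Eventually.of_forall fun z => ?_)
  have hpos : (0:ℝ) < 1 + ‖z‖ ^ 2 := by positivity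
  show ((1:ℝ) + ‖z‖ ^ 2) ^ ((-8 : ℝ)/2) = hfun z
  rw [hfun, show ((-8 : ℝ)/2) = -((4:ℕ):ℝ) by norm_num, Real.rpow_neg hpos.le,
    Real.rpow_natCast]

lemma jap_pow_four (z : E3) : jap z ^ 4 = (1 + ‖z‖ ^ 2) ^ 2 := by
  have h : jap z ^ 2 = 1 + ‖z‖ ^ 2 := Real.sq_sqrt (by positivity)
  calc jap z ^ 4 = (jap z ^ 2) ^ 2 := by ring
    _ = (1 + ‖z‖ ^ 2) ^ 2 := by rw [h]

end ScaleDecompAux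

open ScaleDecompAux

set_option maxHeartbeats 2000000

/-- Scale-decomposition bound: with `N₁ = ‖⟨z⟩⁴⟨w⟩⁴ γ‖²_{L∞}` and `G` satisfying the Green
function bounds `|G(x,y)| ≤ C/|x−y|`, `|∇ₓG(x,y)| ≤ C/|x−y|²`, the localized field piece
`E_R(x,t) = R² ∫∫ |∇ₓ[φ(R⁻¹(x − z − tw)) G(x, z + tw)]| γ²(z,w) dz dw` satisfies
`E_R(x,t) ≤ C' min{1, (R/⟨t⟩)³} N₁`. -/
theorem scale_decomposition_bound
    (C : ℝ) (hC : 0 < C) :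
    ∃ C' > (0 : ℝ), ∀ (N₁ : ℝ), 0 ≤ N₁ →
      ∀ γ : E3 → E3 → ℝ, Measurable (Function.uncurry γ) →
      (∀ z w : E3, (jap z) ^ 4 * (jap w) ^ 4 * |γ z w| ≤ Real.sqrt N₁) →
      ∀ (G : E3 → E3 → ℝ) (gradG : E3 → E3 → E3),
      (∀ x y : E3, x ≠ y → |G x y| ≤ C / ‖x - y‖) →
      (∀ x y : E3, x ≠ y → ‖gradG x y‖ ≤ C / ‖x - y‖ ^ 2) →
      (∀ x y : E3, x ≠ y → HasGradientAt (fun x' => G x' y) (gradG x y) x) →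
      ∀ φ : E3 → ℝ, ContDiff ℝ 1 φ →
      (∀ u : E3, φ u ≠ 0 → 1 / 4 ≤ ‖u‖ ∧ ‖u‖ ≤ 4) →
      (∀ u : E3, |φ u| ≤ 1 ∧ ‖fderiv ℝ φ u‖ ≤ 1) →
      ∀ (R t : ℝ), 0 < R → 0 ≤ t →
      ∀ (x : E3) (K : E3 → E3 → E3),
      (∀ z w : E3,
        HasGradientAt (fun x' => φ (R⁻¹ • (x' - z - t • w)) * G x' (z + t • w)) (K z w) x) →
      R ^ 2 * (∫ p : E3 × E3, ‖K p.1 p.2‖ * (γ p.1 p.2) ^ 2)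
        ≤ C' * min 1 ((R / japR t) ^ 3) * N₁ := by
  classical
  -- universal constants
  set C₈ : ℝ := ∫ z : E3, hfun z with hC₈def
  set V : ℝ := (volume (Metric.ball (0:E3) 1)).toReal with hVdef
  have hC₈nn : 0 ≤ C₈ := integral_nonneg hfun_nonneg
  have hVnn : 0 ≤ V := ENNReal.toReal_nonneg
  refine ⟨20 * C * (C₈ ^ 2 + 192 * (C₈ * V)) + 1, ?_, ?_⟩
  · nlinarith [sq_nonneg C₈, mul_nonneg hC₈nn hVnn]
  intro N₁ hN₁ γ hγmeas hγ G gradG hGbd hgradGbd hGrad φ hφ hφsupp hφbd R t hR ht x K hK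
  set C' : ℝ := 20 * C * (C₈ ^ 2 + 192 * (C₈ * V)) + 1 with hC'def
  -- the annular region
  set A : Set (E3 × E3) := {p | R / 4 ≤ ‖x - p.1 - t • p.2‖ ∧ ‖x - p.1 - t • p.2‖ ≤ 4 * R}
    with hAdef
  have hdcont : Continuous fun p : E3 × E3 => ‖x - p.1 - t • p.2‖ := by fun_prop
  have hAmeas : MeasurableSet A := by
    have : A = {p : E3 × E3 | R / 4 ≤ ‖x - p.1 - t • p.2‖} ∩
        {p : E3 × E3 | ‖x - p.1 - t • p.2‖ ≤ 4 * R} := by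
      ext p; simp [hAdef, Set.mem_setOf_eq, Set.mem_inter_iff]
    rw [this]
    exact (measurableSet_le measurable_const hdcont.measurable).inter
      (measurableSet_le hdcont.measurable measurable_const)
  set H : E3 × E3 → ℝ := fun p => hfun p.1 * hfun p.2 with hHdef
  have hHnn : ∀ p, 0 ≤ H p := fun p => mul_nonneg (hfun_nonneg _) (hfun_nonneg _)
  set F : E3 × E3 → ℝ := A.indicator H with hFdef
  have hFnn : ∀ p, 0 ≤ F p := fun p => Set.indicator_nonneg (fun q _ => hHnn q) p
  have hHint : Integrable H (volume : Measure (E3 × E3)) := by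
    rw [MeasureTheory.Measure.volume_eq_prod E3 E3]
    exact hfun_integrable.mul_prod hfun_integrable
  have hFint : Integrable F (volume : Measure (E3 × E3)) := hHint.indicator hAmeas
  set I : ℝ := ∫ p : E3 × E3, F p with hIdef
  have hInn : 0 ≤ I := integral_nonneg hFnn
  -- pointwise bound
  have hpt : ∀ z w : E3, ‖K z w‖ * γ z w ^ 2 ≤ (20 * C / R ^ 2 * N₁) * F (z, w) := by
    intro z w
    by_cases hmem : (z, w) ∈ A
    · -- on the annulus: compute the gradient and bound it
      have hd1 : R / 4 ≤ ‖x - z - t • w‖ := hmem.1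
      have hd2 : ‖x - z - t • w‖ ≤ 4 * R := hmem.2
      set y : E3 := z + t • w with hydef
      have hxy : x - y = x - z - t • w := by rw [hydef, sub_add_eq_sub_sub]
      have hdpos : 0 < ‖x - y‖ := by rw [hxy]; linarith
      have hne : x ≠ y := by
        intro h; rw [h, sub_self, norm_zero] at hdpos; exact lt_irrefl 0 hdpos
      set u : E3 := R⁻¹ • (x - z - t • w) with hudef
      have hι : HasFDerivAt (fun x' : E3 => R⁻¹ • (x' - z - t • w))
          (R⁻¹ • ContinuousLinearMap.id ℝ E3) x := by
        have h1 : HasFDerivAt (fun x' : E3 => x' - z - t • w)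
            (ContinuousLinearMap.id ℝ E3) x := by
          simpa using ((hasFDerivAt_id x).sub_const z).sub_const (t • w)
        exact h1.const_smul R⁻¹
      have hφu : HasFDerivAt φ (fderiv ℝ φ u) u :=
        ((hφ.differentiable one_ne_zero) u).hasFDerivAt
      have hcomp : HasFDerivAt (fun x' : E3 => φ (R⁻¹ • (x' - z - t • w)))
          ((fderiv ℝ φ u).comp (R⁻¹ • ContinuousLinearMap.id ℝ E3)) x := hφu.comp x hι
      have hGd : HasFDerivAt (fun x' => G x' y)
          ((InnerProductSpace.toDual ℝ E3) (gradG x y)) x := (hGrad x y hne).hasFDerivAt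
      have hprod := hcomp.mul hGd
      have huniq : (InnerProductSpace.toDual ℝ E3) (K z w)
          = φ (R⁻¹ • (x - z - t • w)) • ((InnerProductSpace.toDual ℝ E3) (gradG x y))
            + G x y • ((fderiv ℝ φ u).comp (R⁻¹ • ContinuousLinearMap.id ℝ E3)) :=
        (hK z w).hasFDerivAt.unique hprod
      have hnormK : ‖K z w‖ ≤ 20 * C / R ^ 2 := by
        have h1 : ‖K z w‖ = ‖φ u • ((InnerProductSpace.toDual ℝ E3) (gradG x y))
            + G x y • ((fderiv ℝ φ u).comp (R⁻¹ • ContinuousLinearMap.id ℝ E3))‖ := by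
          rw [← (InnerProductSpace.toDual ℝ E3).norm_map (K z w), huniq, hudef]
        rw [h1]
        have h2 : ‖φ u • ((InnerProductSpace.toDual ℝ E3) (gradG x y))‖
            ≤ 1 * ‖gradG x y‖ := by
          rw [norm_smul, (InnerProductSpace.toDual ℝ E3).norm_map, Real.norm_eq_abs]
          exact mul_le_mul_of_nonneg_right (hφbd u).1 (norm_nonneg _)
        have h3 : ‖G x y • ((fderiv ℝ φ u).comp (R⁻¹ • ContinuousLinearMap.id ℝ E3))‖
            ≤ |G x y| * R⁻¹ := by
          refine (norm_smul_le (G x y)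
            ((fderiv ℝ φ u).comp (R⁻¹ • ContinuousLinearMap.id ℝ E3))).trans ?_
          rw [Real.norm_eq_abs]
          refine mul_le_mul_of_nonneg_left ?_ (abs_nonneg _)
          calc ‖(fderiv ℝ φ u).comp (R⁻¹ • ContinuousLinearMap.id ℝ E3)‖
              ≤ ‖fderiv ℝ φ u‖ * ‖R⁻¹ • ContinuousLinearMap.id ℝ E3‖ :=
                ContinuousLinearMap.opNorm_comp_le _ _
            _ ≤ 1 * (R⁻¹ * 1) := by
                refine mul_le_mul (hφbd u).2 ?_ (norm_nonneg _) (by norm_num)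
                refine (norm_smul_le R⁻¹ (ContinuousLinearMap.id ℝ E3)).trans ?_
                rw [Real.norm_eq_abs, abs_of_pos (by positivity : (0:ℝ) < R⁻¹)]
                exact mul_le_mul_of_nonneg_left ContinuousLinearMap.norm_id_le
                  (by positivity)
            _ = R⁻¹ := by ring
        have hGb := hGbd x y hne
        have hgb := hgradGbd x y hne
        have hd1' : R / 4 ≤ ‖x - y‖ := by rw [hxy]; exact hd1
        have hCd : C / ‖x - y‖ ≤ 4 * C / R := by
          rw [div_le_div_iff₀ hdpos hR]
          nlinarith [mul_nonneg hC.le (sub_nonneg.mpr hd1')]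
        have hCd2 : C / ‖x - y‖ ^ 2 ≤ 16 * C / R ^ 2 := by
          rw [div_le_div_iff₀ (by positivity) (by positivity)]
          have hsq : (R / 4) ^ 2 ≤ ‖x - y‖ ^ 2 := by
            refine pow_le_pow_left₀ (by positivity) hd1' 2
          nlinarith [mul_nonneg hC.le (sub_nonneg.mpr hsq)]
        calc ‖φ u • ((InnerProductSpace.toDual ℝ E3) (gradG x y))
            + G x y • ((fderiv ℝ φ u).comp (R⁻¹ • ContinuousLinearMap.id ℝ E3))‖
            ≤ ‖φ u • ((InnerProductSpace.toDual ℝ E3) (gradG x y))‖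
              + ‖G x y • ((fderiv ℝ φ u).comp (R⁻¹ • ContinuousLinearMap.id ℝ E3))‖ :=
              norm_add_le _ _
          _ ≤ 1 * ‖gradG x y‖ + |G x y| * R⁻¹ := add_le_add h2 h3
          _ ≤ 1 * (16 * C / R ^ 2) + (4 * C / R) * R⁻¹ := by
              refine add_le_add ?_ ?_
              · refine mul_le_mul_of_nonneg_left (hgb.trans hCd2) (by norm_num)
              · exact mul_le_mul_of_nonneg_right (hGb.trans hCd) (by positivity)
          _ = 20 * C / R ^ 2 := by field_simp; ring
      -- bound on γ²
      have hγ2 : γ z w ^ 2 ≤ N₁ * (hfun z * hfun w) := by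
        have h1 := hγ z w
        have hLnn : 0 ≤ jap z ^ 4 * jap w ^ 4 * |γ z w| := by
          have := Real.sqrt_nonneg (1 + ‖z‖ ^ 2)
          have := Real.sqrt_nonneg (1 + ‖w‖ ^ 2)
          unfold jap
          positivity
        have h2 := mul_self_le_mul_self hLnn h1
        rw [Real.mul_self_sqrt hN₁] at h2
        have h3 : (1 + ‖z‖ ^ 2) ^ 4 * (1 + ‖w‖ ^ 2) ^ 4 * γ z w ^ 2 ≤ N₁ := by
          have heq : (jap z ^ 4 * jap w ^ 4 * |γ z w|) * (jap z ^ 4 * jap w ^ 4 * |γ z w|)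
              = (1 + ‖z‖ ^ 2) ^ 4 * (1 + ‖w‖ ^ 2) ^ 4 * γ z w ^ 2 := by
            rw [jap_pow_four, jap_pow_four]
            have habs : |γ z w| * |γ z w| = γ z w ^ 2 := by
              rw [← abs_mul, ← sq, abs_sq]
            linear_combination (1 + ‖z‖ ^ 2) ^ 4 * (1 + ‖w‖ ^ 2) ^ 4 * habs
          rwa [heq] at h2
        have hab : (0:ℝ) < (1 + ‖z‖ ^ 2) ^ 4 * (1 + ‖w‖ ^ 2) ^ 4 := by positivity
        have h4 : γ z w ^ 2 ≤ N₁ / ((1 + ‖z‖ ^ 2) ^ 4 * (1 + ‖w‖ ^ 2) ^ 4) := by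
          rw [le_div_iff₀ hab]; nlinarith
        have h5 : N₁ / ((1 + ‖z‖ ^ 2) ^ 4 * (1 + ‖w‖ ^ 2) ^ 4)
            = N₁ * (hfun z * hfun w) := by
          unfold hfun; field_simp
        rw [h5] at h4; exact h4
      have hFmem : F (z, w) = hfun z * hfun w := by
        rw [hFdef, Set.indicator_of_mem hmem]
      rw [hFmem]
      calc ‖K z w‖ * γ z w ^ 2 ≤ (20 * C / R ^ 2) * (N₁ * (hfun z * hfun w)) := by
            refine mul_le_mul hnormK hγ2 (sq_nonneg _) (by positivity)
        _ = (20 * C / R ^ 2 * N₁) * (hfun z * hfun w) := by ring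
    · -- outside the annulus: the gradient vanishes
      have hKz : K z w = 0 := by
        have hnot : ¬ (R / 4 ≤ ‖x - z - t • w‖ ∧ ‖x - z - t • w‖ ≤ 4 * R) := by
          simpa [hAdef, Set.mem_setOf_eq] using hmem
        push_neg at hnot
        have hev : (fun x' : E3 => φ (R⁻¹ • (x' - z - t • w)) * G x' (z + t • w))
            =ᶠ[nhds x] fun _ => (0:ℝ) := by
          rcases lt_or_ge (‖x - z - t • w‖) (R / 4) with hlt | hge
          · have hball : Metric.ball x (R / 4 - ‖x - z - t • w‖) ∈ nhds x :=
              Metric.ball_mem_nhds x (by linarith)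
            filter_upwards [hball] with x' hx'
            have hxx' : ‖x' - x‖ < R / 4 - ‖x - z - t • w‖ := by
              rwa [Metric.mem_ball, dist_eq_norm] at hx'
            have htri : ‖x' - z - t • w‖ ≤ ‖x' - x‖ + ‖x - z - t • w‖ := by
              have heq : x' - z - t • w = (x' - x) + (x - z - t • w) := by abel
              rw [heq]; exact norm_add_le _ _
            have hφ0 : φ (R⁻¹ • (x' - z - t • w)) = 0 := by
              by_contra hne0
              have hs := (hφsupp _ hne0).1
              rw [norm_smul, norm_inv, Real.norm_eq_abs, abs_of_pos hR] at hs
              have hmul : R * (1/4) ≤ R * (R⁻¹ * ‖x' - z - t • w‖) :=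
                mul_le_mul_of_nonneg_left hs hR.le
              rw [← mul_assoc, mul_inv_cancel₀ (ne_of_gt hR), one_mul] at hmul
              linarith
            simp [hφ0]
          · have h4R : 4 * R < ‖x - z - t • w‖ := hnot hge
            have hball : Metric.ball x (‖x - z - t • w‖ - 4 * R) ∈ nhds x :=
              Metric.ball_mem_nhds x (by linarith)
            filter_upwards [hball] with x' hx'
            have hxx' : ‖x' - x‖ < ‖x - z - t • w‖ - 4 * R := by
              rwa [Metric.mem_ball, dist_eq_norm] at hx'
            have htri : ‖x - z - t • w‖ ≤ ‖x - x'‖ + ‖x' - z - t • w‖ := by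
              have heq : x - z - t • w = (x - x') + (x' - z - t • w) := by abel
              rw [heq]; exact norm_add_le _ _
            have hnx : ‖x - x'‖ = ‖x' - x‖ := norm_sub_rev _ _
            have hφ0 : φ (R⁻¹ • (x' - z - t • w)) = 0 := by
              by_contra hne0
              have hs := (hφsupp _ hne0).2
              rw [norm_smul, norm_inv, Real.norm_eq_abs, abs_of_pos hR] at hs
              have hmul : R * (R⁻¹ * ‖x' - z - t • w‖) ≤ R * 4 :=
                mul_le_mul_of_nonneg_left hs hR.le
              rw [← mul_assoc, mul_inv_cancel₀ (ne_of_gt hR), one_mul] at hmul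
              linarith
            simp [hφ0]
        have h0 := (hK z w).hasFDerivAt.congr_of_eventuallyEq hev.symm
        have h1 : HasFDerivAt (fun _ : E3 => (0:ℝ)) (0 : E3 →L[ℝ] ℝ) x :=
          hasFDerivAt_const 0 x
        have h2 := h0.unique h1
        have h3 : ‖K z w‖ = 0 := by
          rw [← (InnerProductSpace.toDual ℝ E3).norm_map (K z w), h2, norm_zero]
        exact norm_eq_zero.mp h3
      rw [hKz, norm_zero, zero_mul]
      exact mul_nonneg (by positivity) (hFnn _)
  -- Step B : bound the integral by the integral of the majorant
  have hstepB : R ^ 2 * (∫ p : E3 × E3, ‖K p.1 p.2‖ * (γ p.1 p.2) ^ 2)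
      ≤ 20 * C * N₁ * I := by
    have hmono : (∫ p : E3 × E3, ‖K p.1 p.2‖ * (γ p.1 p.2) ^ 2)
        ≤ ∫ p : E3 × E3, (20 * C / R ^ 2 * N₁) * F p := by
      refine integral_mono_of_nonneg (Filter.Eventually.of_forall fun p => by positivity)
        (hFint.const_mul _) (Filter.Eventually.of_forall fun p => hpt p.1 p.2)
    have heval : (∫ p : E3 × E3, (20 * C / R ^ 2 * N₁) * F p)
        = (20 * C / R ^ 2 * N₁) * I := integral_const_mul _ _
    rw [heval] at hmono
    have hR2 : (0:ℝ) < R ^ 2 := by positivity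
    calc R ^ 2 * (∫ p : E3 × E3, ‖K p.1 p.2‖ * (γ p.1 p.2) ^ 2)
        ≤ R ^ 2 * ((20 * C / R ^ 2 * N₁) * I) := by
          exact mul_le_mul_of_nonneg_left hmono hR2.le
      _ = 20 * C * N₁ * I := by field_simp
  -- Step C : the three bounds on I
  have hFint' : Integrable F ((volume : Measure E3).prod (volume : Measure E3)) := by
    rwa [MeasureTheory.Measure.volume_eq_prod E3 E3] at hFint
  have hHint' : Integrable H ((volume : Measure E3).prod (volume : Measure E3)) := by
    rwa [MeasureTheory.Measure.volume_eq_prod E3 E3] at hHint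
  have hI1 : I ≤ C₈ ^ 2 := by
    have hFH : I ≤ ∫ p : E3 × E3, H p := by
      refine integral_mono hFint hHint fun p => ?_
      exact Set.indicator_le_self' (fun q _ => hHnn q) p
    have hHval : (∫ p : E3 × E3, H p) = C₈ * C₈ := by
      rw [MeasureTheory.Measure.volume_eq_prod E3 E3]
      exact integral_prod_mul hfun hfun
    rw [hHval] at hFH
    calc I ≤ C₈ * C₈ := hFH
      _ = C₈ ^ 2 := by ring
  -- bound with the z-ball (valid for all t)
  have hI3 : I ≤ C₈ * ((4 * R) ^ 3 * V) := by
    have hIrepr : I = ∫ w : E3, ∫ z : E3, F (z, w) := by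
      rw [hIdef, MeasureTheory.Measure.volume_eq_prod E3 E3]
      exact integral_prod_symm F hFint'
    have hinner : ∀ w : E3, (∫ z : E3, F (z, w)) ≤ hfun w * ((4 * R) ^ 3 * V) := by
      intro w
      set c : E3 := x - t • w with hcdef
      have hpt2 : ∀ z : E3, F (z, w)
          ≤ hfun w * (Metric.closedBall c (4 * R)).indicator (fun _ => (1:ℝ)) z := by
        intro z
        by_cases hm : (z, w) ∈ A
        · have hd2 : ‖x - z - t • w‖ ≤ 4 * R := hm.2
          have hzball : z ∈ Metric.closedBall c (4 * R) := by
            rw [Metric.mem_closedBall, dist_eq_norm]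
            have heq : z - c = -(x - z - t • w) := by rw [hcdef]; abel
            rw [heq, norm_neg]; exact hd2
          rw [hFdef, Set.indicator_of_mem hm, Set.indicator_of_mem hzball]
          have h1 := hfun_le_one z
          have h2 := hfun_nonneg w
          have h3 := hfun_nonneg z
          simp only [hHdef]
          nlinarith
        · rw [hFdef, Set.indicator_of_notMem hm]
          exact mul_nonneg (hfun_nonneg w) (Set.indicator_nonneg (fun _ _ => zero_le_one) _)
      have hind_int : Integrable
          (fun z => hfun w * (Metric.closedBall c (4 * R)).indicator (fun _ => (1:ℝ)) z)
          (volume : Measure E3) := by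
        refine Integrable.const_mul ?_ _
        rw [integrable_indicator_iff measurableSet_closedBall]
        exact integrableOn_const measure_closedBall_lt_top.ne
      have hle := integral_mono_of_nonneg
        (Filter.Eventually.of_forall fun z => hFnn (z, w)) hind_int
        (Filter.Eventually.of_forall hpt2)
      have hvol : (volume (Metric.closedBall c (4 * R))).toReal = (4 * R) ^ 3 * V := by
        rw [Measure.addHaar_closedBall volume c (by positivity : (0:ℝ) ≤ 4 * R)]
        rw [ENNReal.toReal_mul, ENNReal.toReal_ofReal (by positivity), ← hVdef,
          finrank_euclideanSpace_fin]
      have heval : (∫ z : E3, hfun w *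
          (Metric.closedBall c (4 * R)).indicator (fun _ => (1:ℝ)) z)
          = hfun w * ((4 * R) ^ 3 * V) := by
        rw [integral_const_mul, integral_indicator_const (1:ℝ) measurableSet_closedBall,
          smul_eq_mul, mul_one, measureReal_def, hvol]
      rw [heval] at hle
      exact hle
    have houter := integral_mono_of_nonneg
      (Filter.Eventually.of_forall fun w : E3 => integral_nonneg (fun z => hFnn (z, w)))
      (hfun_integrable.mul_const ((4 * R) ^ 3 * V))
      (Filter.Eventually.of_forall hinner)
    rw [integral_mul_const] at houter
    rw [hIrepr]
    exact houter
  -- bound with the w-ball (for t > 0)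
  have hI2 : 0 < t → I ≤ C₈ * ((4 * R / t) ^ 3 * V) := by
    intro ht0
    have hIrepr : I = ∫ z : E3, ∫ w : E3, F (z, w) := by
      rw [hIdef, MeasureTheory.Measure.volume_eq_prod E3 E3]
      exact integral_prod F hFint'
    have hinner : ∀ z : E3, (∫ w : E3, F (z, w)) ≤ hfun z * ((4 * R / t) ^ 3 * V) := by
      intro z
      set c : E3 := t⁻¹ • (x - z) with hcdef
      have htc : t • c = x - z := by
        rw [hcdef, smul_smul, mul_inv_cancel₀ (ne_of_gt ht0), one_smul]
      have hpt2 : ∀ w : E3, F (z, w)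
          ≤ hfun z * (Metric.closedBall c (4 * R / t)).indicator (fun _ => (1:ℝ)) w := by
        intro w
        by_cases hm : (z, w) ∈ A
        · have hd2 : ‖x - z - t • w‖ ≤ 4 * R := hm.2
          have hwball : w ∈ Metric.closedBall c (4 * R / t) := by
            rw [Metric.mem_closedBall, dist_eq_norm]
            have heq : x - z - t • w = t • (c - w) := by
              rw [smul_sub, htc]
            have hnorm : ‖x - z - t • w‖ = t * ‖c - w‖ := by
              rw [heq, norm_smul, Real.norm_eq_abs, abs_of_pos ht0]
            rw [le_div_iff₀ ht0]
            have : ‖w - c‖ = ‖c - w‖ := norm_sub_rev _ _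
            rw [this, mul_comm]
            rw [hnorm] at hd2
            exact hd2
          rw [hFdef, Set.indicator_of_mem hm, Set.indicator_of_mem hwball]
          have h1 := hfun_le_one w
          have h2 := hfun_nonneg w
          have h3 := hfun_nonneg z
          simp only [hHdef]
          nlinarith
        · rw [hFdef, Set.indicator_of_notMem hm]
          exact mul_nonneg (hfun_nonneg z) (Set.indicator_nonneg (fun _ _ => zero_le_one) _)
      have hind_int : Integrable
          (fun w => hfun z * (Metric.closedBall c (4 * R / t)).indicator (fun _ => (1:ℝ)) w)
          (volume : Measure E3) := by
        refine Integrable.const_mul ?_ _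
        rw [integrable_indicator_iff measurableSet_closedBall]
        exact integrableOn_const measure_closedBall_lt_top.ne
      have hle := integral_mono_of_nonneg
        (Filter.Eventually.of_forall fun w => hFnn (z, w)) hind_int
        (Filter.Eventually.of_forall hpt2)
      have hvol : (volume (Metric.closedBall c (4 * R / t))).toReal = (4 * R / t) ^ 3 * V := by
        rw [Measure.addHaar_closedBall volume c (by positivity : (0:ℝ) ≤ 4 * R / t)]
        rw [ENNReal.toReal_mul, ENNReal.toReal_ofReal (by positivity), ← hVdef,
          finrank_euclideanSpace_fin]
      have heval : (∫ w : E3, hfun z *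
          (Metric.closedBall c (4 * R / t)).indicator (fun _ => (1:ℝ)) w)
          = hfun z * ((4 * R / t) ^ 3 * V) := by
        rw [integral_const_mul, integral_indicator_const (1:ℝ) measurableSet_closedBall,
          smul_eq_mul, mul_one, measureReal_def, hvol]
      rw [heval] at hle
      exact hle
    have houter := integral_mono_of_nonneg
      (Filter.Eventually.of_forall fun z : E3 => integral_nonneg (fun w => hFnn (z, w)))
      (hfun_integrable.mul_const ((4 * R / t) ^ 3 * V))
      (Filter.Eventually.of_forall hinner)
    rw [integral_mul_const] at houter
    rw [hIrepr]
    exact houter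
  -- Step D : conclude
  refine hstepB.trans ?_
  have hjpos : 0 < japR t := Real.sqrt_pos.mpr (by positivity)
  have hj2 : japR t ^ 2 = 1 + t ^ 2 := Real.sq_sqrt (by positivity)
  rcases le_total 1 ((R / japR t) ^ 3) with hmin | hmin
  · rw [min_eq_left hmin]
    have h1 : 20 * C * I ≤ C' := by
      have h2 : 20 * C * I ≤ 20 * C * C₈ ^ 2 :=
        mul_le_mul_of_nonneg_left hI1 (by positivity)
      have h3 : (0:ℝ) ≤ 20 * C * (192 * (C₈ * V)) := by positivity
      rw [hC'def]; nlinarith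
    nlinarith [mul_le_mul_of_nonneg_left h1 hN₁]
  · rw [min_eq_right hmin, div_pow]
    have hj3pos : 0 < japR t ^ 3 := by positivity
    have hrw : C' * (R ^ 3 / japR t ^ 3) * N₁ = C' * R ^ 3 * N₁ / japR t ^ 3 := by ring
    rw [hrw, le_div_iff₀ hj3pos]
    rcases le_total t 1 with ht1 | ht1
    · -- small time : use hI3 and japR t ^ 3 ≤ 3
      have hj2le : japR t ^ 2 ≤ 2 := by rw [hj2]; nlinarith
      have hj32 : japR t ≤ 3 / 2 := by nlinarith
      have hjcube : japR t ^ 3 ≤ 3 := by nlinarith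
      have hIb : I ≤ 64 * (C₈ * V) * R ^ 3 := by
        have : C₈ * ((4 * R) ^ 3 * V) = 64 * (C₈ * V) * R ^ 3 := by ring
        rw [this] at hI3; exact hI3
      have key : 20 * C * I * japR t ^ 3 ≤ C' * R ^ 3 := by
        have h1 : I * japR t ^ 3 ≤ (64 * (C₈ * V) * R ^ 3) * 3 :=
          mul_le_mul hIb hjcube (by positivity) (by positivity)
        have h2 : 20 * C * (I * japR t ^ 3) ≤ 20 * C * ((64 * (C₈ * V) * R ^ 3) * 3) :=
          mul_le_mul_of_nonneg_left h1 (by positivity)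
        have h3 : 20 * C * ((64 * (C₈ * V) * R ^ 3) * 3)
            = (20 * C * (192 * (C₈ * V))) * R ^ 3 := by ring
        have h4 : (20 * C * (192 * (C₈ * V))) * R ^ 3 ≤ C' * R ^ 3 := by
          refine mul_le_mul_of_nonneg_right ?_ (by positivity)
          rw [hC'def]; nlinarith [sq_nonneg C₈, mul_nonneg hC₈nn hVnn]
        nlinarith
      nlinarith [mul_le_mul_of_nonneg_left key hN₁]
    · -- large time : use hI2 and japR t ^ 3 ≤ 3 t ^ 3
      have ht0 : 0 < t := lt_of_lt_of_le one_pos ht1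
      have hj2le : japR t ^ 2 ≤ 2 * t ^ 2 := by rw [hj2]; nlinarith
      have hj32 : japR t ≤ 3 / 2 * t := by nlinarith
      have hjcube : japR t ^ 3 ≤ 3 * t ^ 3 := by nlinarith
      have hIb : I * t ^ 3 ≤ 64 * (C₈ * V) * R ^ 3 := by
        have h5 := hI2 ht0
        have h6 : C₈ * ((4 * R / t) ^ 3 * V) = (64 * (C₈ * V) * R ^ 3) / t ^ 3 := by
          field_simp; ring
        rw [h6, le_div_iff₀ (by positivity)] at h5
        exact h5
      have key : 20 * C * I * japR t ^ 3 ≤ C' * R ^ 3 := by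
        have h1 : I * japR t ^ 3 ≤ I * (3 * t ^ 3) :=
          mul_le_mul_of_nonneg_left hjcube hInn
        have h1' : I * (3 * t ^ 3) ≤ 3 * (64 * (C₈ * V) * R ^ 3) := by nlinarith
        have h2 : 20 * C * (I * japR t ^ 3) ≤ 20 * C * (3 * (64 * (C₈ * V) * R ^ 3)) := by
          refine mul_le_mul_of_nonneg_left (h1.trans h1') (by positivity)
        have h3 : 20 * C * (3 * (64 * (C₈ * V) * R ^ 3))
            = (20 * C * (192 * (C₈ * V))) * R ^ 3 := by ring
        have h4 : (20 * C * (192 * (C₈ * V))) * R ^ 3 ≤ C' * R ^ 3 := by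
          refine mul_le_mul_of_nonneg_right ?_ (by positivity)
          rw [hC'def]; nlinarith [sq_nonneg C₈, mul_nonneg hC₈nn hVnn]
        nlinarith
      nlinarith [mul_le_mul_of_nonneg_left key hN₁]
end
end
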